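/- arXiv:2411.07934 — 13 statements merged into one kernel-verified Lean document; each statement's English description precedes it below -/
import Mathlib

section
/- Let S be a nonempty finite set of states, A a metric space of actions, P : S × A × S → ℝ with |P(s'|s,a₁) − P(s'|s,a₂)| ≤ K_P · dist(a₁,a₂) for all s, s', a₁, a₂, R : S × A → ℝ with |R(s,a₁) − R(s,a₂)| ≤ K_R · dist(a₁,a₂) for all s, a₁, a₂, and γ ∈ [0,1). Let Q : S × A → ℝ satisfy |Q(s,a)| ≤ Q_max for all (s,a) and |Q(s,a₁) − Q(s,a₂)| ≤ K_Q · dist(a₁,a₂) for all s, a₁, a₂, and let u assign to each state a nonempty finite subset of A. With (T_u Q)(s,a) = R(s,a) + γ ∑_{s'} P(s'|s,a) · max_{a'∈u(s')} Q(s',a'), for all s and all actions ã, a: |((T_u Q)(s,ã) − Q(s,ã)) − ((T_u Q)(s,a) − Q(s,a))| ≤ (K_Q + K_R + γ·K_P·|S|·Q_max) · dist(ã,a). -/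
/-- Lipschitz continuity of the Bellman residual `(T_u Q)(s,·) − Q(s,·)` in the action:
`|((T_u Q)(s,ã) − Q(s,ã)) − ((T_u Q)(s,a) − Q(s,a))| ≤ (K_Q + K_R + γ·K_P·|S|·Q_max)·dist(ã,a)`. -/
theorem bellman_residual_lipschitz_in_action
    {S A : Type*} [Fintype S] [Nonempty S] [MetricSpace A]
    (P : S → A → S → ℝ) (R : S → A → ℝ) (γ K_P K_R K_Q Q_max : ℝ)
    (hγ0 : 0 ≤ γ) (hγ1 : γ < 1)
    (hP : ∀ s s' a₁ a₂, |P s a₁ s' - P s a₂ s'| ≤ K_P * dist a₁ a₂)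
    (hR : ∀ s a₁ a₂, |R s a₁ - R s a₂| ≤ K_R * dist a₁ a₂)
    (Q : S → A → ℝ) (hQbdd : ∀ s a, |Q s a| ≤ Q_max)
    (hQlip : ∀ s a₁ a₂, |Q s a₁ - Q s a₂| ≤ K_Q * dist a₁ a₂)
    (u : S → Finset A) (hu : ∀ s, (u s).Nonempty)
    (TQ : S → A → ℝ)
    (hTQ : ∀ s a, TQ s a =
      R s a + γ * ∑ s' : S, P s a s' * (u s').sup' (hu s') (fun a' => Q s' a'))
    (s : S) (atil a : A) :
    |(TQ s atil - Q s atil) - (TQ s a - Q s a)| ≤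
      (K_Q + K_R + γ * K_P * (Fintype.card S : ℝ) * Q_max) * dist atil a := by
  set M : S → ℝ := fun s' => (u s').sup' (hu s') (fun a' => Q s' a') with hM
  have hMbdd : ∀ s', |M s'| ≤ Q_max := by
    intro s'
    obtain ⟨b, hb, hbe⟩ := Finset.exists_mem_eq_sup' (hu s') (fun a' => Q s' a')
    rw [hM]; simp only; rw [hbe]; exact hQbdd s' b
  have key : (TQ s atil - Q s atil) - (TQ s a - Q s a) =
      (R s atil - R s a) + γ * ∑ s' : S, (P s atil s' - P s a s') * M s'
        - (Q s atil - Q s a) := by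
    rw [hTQ s atil, hTQ s a]
    rw [Finset.sum_congr rfl (fun s' _ => sub_mul (P s atil s') (P s a s') (M s')),
      Finset.sum_sub_distrib]
    ring
  rw [key]
  have h1 : |∑ s' : S, (P s atil s' - P s a s') * M s'| ≤
      (Fintype.card S : ℝ) * (K_P * dist atil a * Q_max) := by
    calc |∑ s' : S, (P s atil s' - P s a s') * M s'|
        ≤ ∑ s' : S, |(P s atil s' - P s a s') * M s'| := Finset.abs_sum_le_sum_abs _ _
      _ ≤ ∑ s' : S, K_P * dist atil a * Q_max := by
          apply Finset.sum_le_sum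
          intro s' _
          rw [abs_mul]
          exact mul_le_mul (hP s s' atil a) (hMbdd s') (abs_nonneg _)
            (le_trans (abs_nonneg _) (hP s s' atil a))
      _ = (Fintype.card S : ℝ) * (K_P * dist atil a * Q_max) := by
          rw [Finset.sum_const, Finset.card_univ, nsmul_eq_mul]
  calc |(R s atil - R s a) + γ * ∑ s' : S, (P s atil s' - P s a s') * M s'
        - (Q s atil - Q s a)|
      ≤ |R s atil - R s a| + γ * |∑ s' : S, (P s atil s' - P s a s') * M s'|
          + |Q s atil - Q s a| := by
        have := abs_add_le (R s atil - R s a) (γ * ∑ s' : S, (P s atil s' - P s a s') * M s')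
        have h2 := abs_sub ((R s atil - R s a) + γ * ∑ s' : S, (P s atil s' - P s a s') * M s')
          (Q s atil - Q s a)
        rw [abs_mul, abs_of_nonneg hγ0] at *
        linarith
    _ ≤ K_R * dist atil a + γ * ((Fintype.card S : ℝ) * (K_P * dist atil a * Q_max))
          + K_Q * dist atil a := by
        gcongr
        · exact hR s atil a
        · exact hQlip s atil a
    _ = (K_Q + K_R + γ * K_P * (Fintype.card S : ℝ) * Q_max) * dist atil a := by ring
end

section
/- Let S be a nonempty finite set of states, A a metric space of actions, P : S × A × S → ℝ with |P(s'|s,a₁) − P(s'|s,a₂)| ≤ K_P·dist(a₁,a₂), R : S × A → ℝ with |R(s,a₁) − R(s,a₂)| ≤ K_R·dist(a₁,a₂), γ ∈ [0,1), and Q : S × A → ℝ with |Q(s,a)| ≤ Q_max and |Q(s,a₁) − Q(s,a₂)| ≤ K_Q·dist(a₁,a₂) for all arguments. Let u assign to each state a nonempty finite subset of A, and define (T_u Q)(s,a) = R(s,a) + γ ∑_{s'} P(s'|s,a)·max_{a'∈u(s')} Q(s',a'). Let H be a real inner product space and g : A → H satisfy ‖g(a₁) − g(a₂)‖ ≤ K_g·dist(a₁,a₂)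 (K_g > 0) and ‖g(a')‖ ≤ g_max for all a'. Fix s ∈ S and actions ã ≠ a with K_g·dist(ã,a) ≤ ‖g(a)‖, and fix a learning rate α with 0 ≤ α ≤ 1/g_max². Then there exist constants C₁ ∈ [0,1] and C₂ with |C₂| ≤ K_Q + K_R + γ·K_P·|S|·Q_max such that α·⟨g(ã), g(a)⟩·((T_u Q)(s,a) − Q(s,a)) = C₁·((T_u Q)(s,ã) − Q(s,ã) + C₂·dist(ã,a)). -/
/-!
Take `C₁ = α ⟪g ã, g a⟫` and let `C₂` be the difference quotient, between `a` and `ã`, of the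
TD error `δ = T_u Q - Q`. Then `C₁ ≥ 0` because `‖g ã - g a‖ ≤ K_g · dist(ã, a) ≤ ‖g a‖` makes
the angle between `g ã` and `g a` acute, and `C₁ ≤ 1` by Cauchy–Schwarz and `α ≤ 1 / g_max²`.
The bound on `|C₂|` is a Lipschitz bound on `δ` in the action: the reward contributes `K_R`,
`Q` contributes `K_Q`, and the expected greedy value contributes `γ K_P |S| Q_max`, since the
transition probabilities move by at most `K_P · dist` while the values `max_{u s'} Q` stay
bounded by `Q_max`.
-/

open Finset

theorem real_inner_nonneg_of_norm_sub_le {H : Type*} [NormedAddCommGroup H]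
    [InnerProductSpace ℝ H] {x y : H} (h : ‖x - y‖ ≤ ‖y‖) : 0 ≤ (inner ℝ x y : ℝ) := by
  have hsq : ‖x - y‖ ^ 2 ≤ ‖y‖ ^ 2 := pow_le_pow_left₀ (norm_nonneg _) h 2
  rw [norm_sub_sq_real] at hsq
  nlinarith [sq_nonneg ‖x‖]

theorem real_inner_le_sq_of_norm_le {H : Type*} [NormedAddCommGroup H]
    [InnerProductSpace ℝ H] {x y : H} {m : ℝ} (hx : ‖x‖ ≤ m) (hy : ‖y‖ ≤ m) :
    (inner ℝ x y : ℝ) ≤ m ^ 2 :=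
  calc (inner ℝ x y : ℝ) ≤ ‖x‖ * ‖y‖ := real_inner_le_norm x y
    _ ≤ m * m := mul_le_mul hx hy (norm_nonneg y) ((norm_nonneg x).trans hx)
    _ = m ^ 2 := (sq m).symm

/-- With the convention `1 / 0 = 0`, the hypothesis `α ≤ 1 / m ^ 2` also covers `m = 0`. -/
theorem mul_sq_le_one_of_le_one_div_sq {α m : ℝ} (hα : α ≤ 1 / m ^ 2) : α * m ^ 2 ≤ 1 :=
  calc α * m ^ 2 ≤ 1 / m ^ 2 * m ^ 2 := mul_le_mul_of_nonneg_right hα (sq_nonneg m)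
    _ ≤ 1 := by rw [one_div]; exact inv_mul_le_one

theorem abs_sup'_le {ι : Type*} {s : Finset ι} (hs : s.Nonempty) {f : ι → ℝ} {M : ℝ}
    (hf : ∀ i ∈ s, |f i| ≤ M) : |s.sup' hs f| ≤ M := by
  obtain ⟨i, hi, hmax⟩ := s.exists_mem_eq_sup' hs f
  exact hmax ▸ hf i hi

theorem abs_sum_mul_sub_sum_mul_le {ι : Type*} [Fintype ι] {p q v : ι → ℝ} {ε M : ℝ}
    (hpq : ∀ i, |p i - q i| ≤ ε) (hv : ∀ i, |v i| ≤ M) :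
    |∑ i, p i * v i - ∑ i, q i * v i| ≤ ε * Fintype.card ι * M := by
  have hε : ∀ i, 0 ≤ ε := fun i => (abs_nonneg _).trans (hpq i)
  calc |∑ i, p i * v i - ∑ i, q i * v i| = |∑ i, (p i - q i) * v i| := by
        simp only [sub_mul, sum_sub_distrib]
    _ ≤ ∑ i, |(p i - q i) * v i| := abs_sum_le_sum_abs _ _
    _ ≤ ∑ _i : ι, ε * M := sum_le_sum fun i _ => by
        rw [abs_mul]; exact mul_le_mul (hpq i) (hv i) (abs_nonneg _) (hε i)
    _ = ε * Fintype.card ι * M := by rw [sum_const, card_univ, nsmul_eq_mul]; ring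

noncomputable def bellmanBackup {S A : Type*} [Fintype S] (R : S → A → ℝ) (P : S → A → S → ℝ)
    (γ : ℝ) (u : S → Finset A) (hu : ∀ s, (u s).Nonempty) (Q : S → A → ℝ) (s : S) (a : A) : ℝ :=
  R s a + γ * ∑ s', P s a s' * (u s').sup' (hu s') (Q s')

theorem abs_bellmanBackup_sub_le {S A : Type*} [Fintype S] [Dist A]
    {R : S → A → ℝ} {P : S → A → S → ℝ} {γ K_P K_R Q_max : ℝ} (hγ : 0 ≤ γ)
    {u : S → Finset A} (hu : ∀ s, (u s).Nonempty) {Q : S → A → ℝ} (hQ : ∀ s a, |Q s a| ≤ Q_max)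
    {s : S} {a₁ a₂ : A} (hP : ∀ s', |P s a₁ s' - P s a₂ s'| ≤ K_P * dist a₁ a₂)
    (hR : |R s a₁ - R s a₂| ≤ K_R * dist a₁ a₂) :
    |bellmanBackup R P γ u hu Q s a₁ - bellmanBackup R P γ u hu Q s a₂| ≤
      (K_R + γ * K_P * Fintype.card S * Q_max) * dist a₁ a₂ := by
  set V : S → ℝ := fun s' => (u s').sup' (hu s') (Q s')
  have hsum := abs_sum_mul_sub_sum_mul_le hP fun s' => abs_sup'_le (hu s') fun b _ => hQ s' b
  have hγsum : |γ * (∑ s', P s a₁ s' * V s' - ∑ s', P s a₂ s' * V s')| ≤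
      γ * (K_P * dist a₁ a₂ * Fintype.card S * Q_max) := by
    rw [abs_mul, abs_of_nonneg hγ]
    exact mul_le_mul_of_nonneg_left hsum hγ
  calc _ = |(R s a₁ - R s a₂) + γ * (∑ s', P s a₁ s' * V s' - ∑ s', P s a₂ s' * V s')| := by
        simp only [bellmanBackup, V]; ring_nf
    _ ≤ |R s a₁ - R s a₂| + |γ * (∑ s', P s a₁ s' * V s' - ∑ s', P s a₂ s' * V s')| :=
        abs_add_le _ _
    _ ≤ _ := by linarith

theorem exists_abs_le_eq_add_mul_of_abs_sub_le {x y L d : ℝ} (hd : 0 < d)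
    (h : |x - y| ≤ L * d) : ∃ C, |C| ≤ L ∧ x = y + C * d :=
  ⟨(x - y) / d, by rwa [abs_div, abs_of_pos hd, div_le_iff₀ hd], by
    rw [div_mul_cancel₀ _ hd.ne']; ring⟩

theorem td_step_generalization_effect_general
    {S A H : Type*} [Fintype S] [MetricSpace A]
    [NormedAddCommGroup H] [InnerProductSpace ℝ H]
    (P : S → A → S → ℝ) (R : S → A → ℝ) (γ K_P K_R K_Q Q_max : ℝ)
    (hγ0 : 0 ≤ γ)
    (hP : ∀ s s' a₁ a₂, |P s a₁ s' - P s a₂ s'| ≤ K_P * dist a₁ a₂)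
    (hR : ∀ s a₁ a₂, |R s a₁ - R s a₂| ≤ K_R * dist a₁ a₂)
    (Q : S → A → ℝ) (hQbdd : ∀ s a, |Q s a| ≤ Q_max)
    (hQlip : ∀ s a₁ a₂, |Q s a₁ - Q s a₂| ≤ K_Q * dist a₁ a₂)
    (u : S → Finset A) (hu : ∀ s, (u s).Nonempty)
    (TQ : S → A → ℝ)
    (hTQ : ∀ s a, TQ s a =
      R s a + γ * ∑ s' : S, P s a s' * (u s').sup' (hu s') (fun a' => Q s' a'))
    (g : A → H) (K_g g_max : ℝ)
    (hg : ∀ a₁ a₂, ‖g a₁ - g a₂‖ ≤ K_g * dist a₁ a₂)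
    (hgbdd : ∀ a' : A, ‖g a'‖ ≤ g_max)
    (s : S) (atil a : A) (hne : atil ≠ a)
    (hclose : K_g * dist atil a ≤ ‖g a‖)
    (α : ℝ) (hα0 : 0 ≤ α) (hα1 : α ≤ 1 / g_max ^ 2) :
    ∃ C₁ C₂ : ℝ, C₁ ∈ Set.Icc (0 : ℝ) 1 ∧
      |C₂| ≤ K_Q + K_R + γ * K_P * (Fintype.card S : ℝ) * Q_max ∧
      α * (inner ℝ (g atil) (g a) : ℝ) * (TQ s a - Q s a) =
        C₁ * (TQ s atil - Q s atil + C₂ * dist atil a) := by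
  have hinner_nonneg : 0 ≤ (inner ℝ (g atil) (g a) : ℝ) :=
    real_inner_nonneg_of_norm_sub_le ((hg atil a).trans hclose)
  have hC₁_le_one : α * (inner ℝ (g atil) (g a) : ℝ) ≤ 1 :=
    (mul_le_mul_of_nonneg_left (real_inner_le_sq_of_norm_le (hgbdd atil) (hgbdd a)) hα0).trans
      (mul_sq_le_one_of_le_one_div_sq hα1)
  have hT : ∀ s a, TQ s a = bellmanBackup R P γ u hu Q s a := hTQ
  have hTD_error : |(TQ s a - Q s a) - (TQ s atil - Q s atil)| ≤
      (K_Q + K_R + γ * K_P * Fintype.card S * Q_max) * dist a atil := by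
    have hTlip := abs_bellmanBackup_sub_le (s := s) (a₁ := a) (a₂ := atil) hγ0 hu hQbdd
      (hP s · a atil) (hR s a atil)
    have hQ := hQlip s a atil
    rw [hT, hT]
    calc _ = |(bellmanBackup R P γ u hu Q s a - bellmanBackup R P γ u hu Q s atil)
          - (Q s a - Q s atil)| := by ring_nf
      _ ≤ _ := abs_sub _ _
      _ ≤ _ := by linarith
  rw [dist_comm] at hTD_error
  obtain ⟨C₂, hC₂, hTD_eq⟩ := exists_abs_le_eq_add_mul_of_abs_sub_le (dist_pos.mpr hne) hTD_error
  exact ⟨_, C₂, ⟨mul_nonneg hα0 hinner_nonneg, hC₁_le_one⟩, hC₂, by rw [hTD_eq]⟩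

/-- Generalization effect of one TD gradient step (Theorem 1 / Theorem A.6): the first-order
change of `Q` at the out-of-dataset pair `(s,ã)` equals
`C₁·((T_u Q)(s,ã) − Q(s,ã) + C₂·dist(ã,a))` with `C₁ ∈ [0,1]` and
`|C₂| ≤ K_Q + K_R + γ·K_P·|S|·Q_max`. -/
theorem td_step_generalization_effect
    {S A H : Type*} [Fintype S] [Nonempty S] [MetricSpace A]
    [NormedAddCommGroup H] [InnerProductSpace ℝ H]
    (P : S → A → S → ℝ) (R : S → A → ℝ) (γ K_P K_R K_Q Q_max : ℝ)
    (hγ0 : 0 ≤ γ) (hγ1 : γ < 1)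
    (hP : ∀ s s' a₁ a₂, |P s a₁ s' - P s a₂ s'| ≤ K_P * dist a₁ a₂)
    (hR : ∀ s a₁ a₂, |R s a₁ - R s a₂| ≤ K_R * dist a₁ a₂)
    (Q : S → A → ℝ) (hQbdd : ∀ s a, |Q s a| ≤ Q_max)
    (hQlip : ∀ s a₁ a₂, |Q s a₁ - Q s a₂| ≤ K_Q * dist a₁ a₂)
    (u : S → Finset A) (hu : ∀ s, (u s).Nonempty)
    (TQ : S → A → ℝ)
    (hTQ : ∀ s a, TQ s a =
      R s a + γ * ∑ s' : S, P s a s' * (u s').sup' (hu s') (fun a' => Q s' a'))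
    (g : A → H) (K_g g_max : ℝ) (hKg : 0 < K_g)
    (hg : ∀ a₁ a₂, ‖g a₁ - g a₂‖ ≤ K_g * dist a₁ a₂)
    (hgbdd : ∀ a' : A, ‖g a'‖ ≤ g_max)
    (s : S) (atil a : A) (hne : atil ≠ a)
    (hclose : K_g * dist atil a ≤ ‖g a‖)
    (α : ℝ) (hα0 : 0 ≤ α) (hα1 : α ≤ 1 / g_max ^ 2) :
    ∃ C₁ C₂ : ℝ, C₁ ∈ Set.Icc (0 : ℝ) 1 ∧
      |C₂| ≤ K_Q + K_R + γ * K_P * (Fintype.card S : ℝ) * Q_max ∧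
      α * (inner ℝ (g atil) (g a) : ℝ) * (TQ s a - Q s a) =
        C₁ * (TQ s atil - Q s atil + C₂ * dist atil a) :=
  td_step_generalization_effect_general P R γ K_P K_R K_Q Q_max hγ0 hP hR Q hQbdd hQlip u hu TQ hTQ
    g K_g g_max hg hgbdd s atil a hne hclose α hα0 hα1
end

section
/- Let S be a nonempty finite set of states, A a set of actions, P : S × A × S → ℝ with P(s'|s,a) ≥ 0 and ∑_{s'∈S} P(s'|s,a) = 1 for all (s,a), R : S × A → ℝ, and γ ∈ [0,1). Let β̂ assign to each state s a nonempty finite subset β̂(s) ⊆ A, and define (T_In Q)(s,a) = R(s,a) + γ ∑_{s'} P(s'|s,a) · max_{a'∈β̂(s')} Q(s',a'). Then T_In is a γ-contraction on the in-sample area: for all f₁, f₂ : S × A → ℝ and all B ≥ 0, if |f₁(s,a) − f₂(s,a)| ≤ B for every s ∈ S and every a ∈ β̂(s), then |(T_In f₁)(s,a) − (T_In f₂)(s,a)| ≤ γ·B for every s ∈ S and every a ∈ β̂(s). -/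
/-! Taking a maximum over the same nonempty action set is `1`-Lipschitz in the sup norm, and
averaging against a probability vector is too; the factor `γ` in front of the expectation
then gives the contraction. -/

namespace Finset

variable {ι α : Type*} [AddCommGroup α] [LinearOrder α] [IsOrderedAddMonoid α]

lemma sup'_le_sup'_add_of_le {s : Finset ι} (hs : s.Nonempty) {f g : ι → α} {B : α}
    (h : ∀ i ∈ s, f i ≤ g i + B) : s.sup' hs f ≤ s.sup' hs g + B :=
  sup'_le hs f fun i hi => (h i hi).trans (add_le_add_left (le_sup' g hi) B)

lemma abs_sup'_sub_sup'_le {s : Finset ι} (hs : s.Nonempty) {f g : ι → α} {B : α}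
    (h : ∀ i ∈ s, |f i - g i| ≤ B) : |s.sup' hs f - s.sup' hs g| ≤ B := by
  rw [abs_sub_le_iff, sub_le_iff_le_add', sub_le_iff_le_add']
  exact ⟨sup'_le_sup'_add_of_le hs fun i hi => sub_le_iff_le_add'.mp (le_of_abs_le (h i hi)),
    sup'_le_sup'_add_of_le hs fun i hi => sub_le_iff_le_add'.mp (abs_sub_le_iff.mp (h i hi)).2⟩

end Finset

lemma abs_sum_mul_le_of_sum_eq_one {ι R : Type*} [CommRing R] [LinearOrder R]
    [IsStrictOrderedRing R] {s : Finset ι} {w x : ι → R} {B : R}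
    (hw : ∀ i ∈ s, 0 ≤ w i) (hw_sum : ∑ i ∈ s, w i = 1) (hx : ∀ i ∈ s, |x i| ≤ B) :
    |∑ i ∈ s, w i * x i| ≤ B :=
  calc |∑ i ∈ s, w i * x i|
      ≤ ∑ i ∈ s, |w i * x i| := Finset.abs_sum_le_sum_abs _ _
    _ ≤ ∑ i ∈ s, w i * B := Finset.sum_le_sum fun i hi => by
        rw [abs_mul, abs_of_nonneg (hw i hi)]
        exact mul_le_mul_of_nonneg_left (hx i hi) (hw i hi)
    _ = B := by rw [← Finset.sum_mul, hw_sum, one_mul]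

theorem in_sample_operator_gamma_contraction_general
    {S A : Type*} [Fintype S]
    (P : S → A → S → ℝ) (R : S → A → ℝ) (γ : ℝ)
    (hγ0 : 0 ≤ γ)
    (hPpos : ∀ s a s', 0 ≤ P s a s') (hPsum : ∀ s a, ∑ s' : S, P s a s' = 1)
    (βhat : S → Finset A) (hβhat : ∀ s, (βhat s).Nonempty)
    (TIn : (S → A → ℝ) → S → A → ℝ)
    (hTIn : ∀ Q s a, TIn Q s a =
      R s a + γ * ∑ s' : S, P s a s' * (βhat s').sup' (hβhat s') (fun a' => Q s' a'))
    (f₁ f₂ : S → A → ℝ) (B : ℝ)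
    (hf : ∀ s, ∀ a ∈ βhat s, |f₁ s a - f₂ s a| ≤ B) :
    ∀ s, ∀ a ∈ βhat s, |TIn f₁ s a - TIn f₂ s a| ≤ γ * B := by
  intro s a _
  have hmax : ∀ s' : S, |(βhat s').sup' (hβhat s') (f₁ s') - (βhat s').sup' (hβhat s') (f₂ s')|
      ≤ B := fun s' => Finset.abs_sup'_sub_sup'_le (hβhat s') (hf s')
  rw [hTIn, hTIn, add_sub_add_left_eq_sub, ← mul_sub, ← Finset.sum_sub_distrib, abs_mul,
    abs_of_nonneg hγ0]
  simp only [← mul_sub]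
  exact mul_le_mul_of_nonneg_left (abs_sum_mul_le_of_sum_eq_one (fun s' _ => hPpos s a s')
    (hPsum s a) fun s' _ => hmax s') hγ0

/-- The in-sample operator `T_In` is a `γ`-contraction on the in-sample area
`{(s,a) | a ∈ β̂(s)}` under the `L∞` norm. -/
theorem in_sample_operator_gamma_contraction
    {S A : Type*} [Fintype S] [Nonempty S]
    (P : S → A → S → ℝ) (R : S → A → ℝ) (γ : ℝ)
    (hγ0 : 0 ≤ γ) (hγ1 : γ < 1)
    (hPpos : ∀ s a s', 0 ≤ P s a s') (hPsum : ∀ s a, ∑ s' : S, P s a s' = 1)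
    (βhat : S → Finset A) (hβhat : ∀ s, (βhat s).Nonempty)
    (TIn : (S → A → ℝ) → S → A → ℝ)
    (hTIn : ∀ Q s a, TIn Q s a =
      R s a + γ * ∑ s' : S, P s a s' * (βhat s').sup' (hβhat s') (fun a' => Q s' a'))
    (f₁ f₂ : S → A → ℝ) (B : ℝ) (hB : 0 ≤ B)
    (hf : ∀ s, ∀ a ∈ βhat s, |f₁ s a - f₂ s a| ≤ B) :
    ∀ s, ∀ a ∈ βhat s, |TIn f₁ s a - TIn f₂ s a| ≤ γ * B :=
  in_sample_operator_gamma_contraction_general P R γ hγ0 hPpos hPsum βhat hβhat TIn hTIn f₁ f₂ B hf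
end

section
/- Let S be a nonempty finite set of states, A a set of actions, P : S × A × S → ℝ with P(s'|s,a) ≥ 0 and ∑_{s'∈S} P(s'|s,a) = 1 for all (s,a), R : S × A → ℝ, and γ ∈ [0,1). Let β̂ assign to each state a nonempty finite subset β̂(s) ⊆ A, and define (T_In Q)(s,a) = R(s,a) + γ ∑_{s'} P(s'|s,a) · max_{a'∈β̂(s')} Q(s',a'). Then: (i) there exists a function Q*_In : S × A → ℝ satisfying Q*_In(s,a) = (T_In Q*_In)(s,a) for all (s,a) with a ∈ β̂(s); (ii) any two such functions agree at all (s,a) with a ∈ β̂(s); and (iii) for every Q⁰ : S × A → ℝ, the iterates (T_In)^k Q⁰ converge to Q*_In pointwise on the pairs (s,a) with a ∈ β̂(s) as k → ∞. -/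
/-!
Write `backup V s a = R s a + γ ∑ P(s'|s,a) V(s')` and `greedyValue Q s = max_{a ∈ β̂(s)} Q(s,a)`,
so that `T_In = backup ∘ greedyValue`. The conjugate operator `greedyValue ∘ backup` acts on the
finite-dimensional space `S → ℝ` with the sup metric, where it is a `γ`-contraction: `backup` is
`γ`-Lipschitz because `P(·|s,a)` is a probability vector, and a maximum over a finite set is
`1`-Lipschitz. With `V*` its Banach fixed point, `Q*_In = backup V*`; the iterates of `T_In` are
`backup` applied to those of the conjugate operator, and a fixed point of `T_In` on the in-sample
pairs has as greedy value a fixed point of the conjugate operator, hence `V*`.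
-/

open Finset Filter Topology

theorem Finset.dist_sup'_sup'_le {ι : Type*} {s : Finset ι} (hs : s.Nonempty) {f g : ι → ℝ}
    {C : ℝ} (h : ∀ i ∈ s, dist (f i) (g i) ≤ C) : dist (s.sup' hs f) (s.sup' hs g) ≤ C := by
  have sup'_le_add : ∀ f g : ι → ℝ, (∀ i ∈ s, dist (f i) (g i) ≤ C) →
      s.sup' hs f ≤ s.sup' hs g + C := by
    intro f g h
    refine sup'_le hs f fun i hi => ?_
    have hfg := (abs_sub_le_iff.mp (Real.dist_eq _ _ ▸ h i hi)).1
    linarith [le_sup' g hi]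
  rw [Real.dist_eq, abs_sub_le_iff]
  constructor
  · linarith [sup'_le_add f g h]
  · linarith [sup'_le_add g f fun i hi => dist_comm (f i) (g i) ▸ h i hi]

theorem dist_sum_mul_le_of_stochastic {ι : Type*} [Fintype ι] {p : ι → ℝ} (hp : ∀ i, 0 ≤ p i)
    (hp1 : ∑ i, p i = 1) (V W : ι → ℝ) :
    dist (∑ i, p i * V i) (∑ i, p i * W i) ≤ dist V W := by
  rw [Real.dist_eq, ← sum_sub_distrib]
  calc |∑ i, (p i * V i - p i * W i)| ≤ ∑ i, |p i * V i - p i * W i| := abs_sum_le_sum_abs _ _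
    _ ≤ ∑ i, p i * dist V W := by
        refine sum_le_sum fun i _ => ?_
        rw [← mul_sub, abs_mul, abs_of_nonneg (hp i), ← Real.dist_eq]
        exact mul_le_mul_of_nonneg_left (dist_le_pi_dist V W i) (hp i)
    _ = dist V W := by rw [← sum_mul, hp1, one_mul]

namespace InSample

variable {S A : Type*}

def greedyValue (βhat : S → Finset A) (hβhat : ∀ s, (βhat s).Nonempty) (Q : S → A → ℝ) :
    S → ℝ :=
  fun s => (βhat s).sup' (hβhat s) (Q s)

theorem greedyValue_congr {βhat : S → Finset A} (hβhat : ∀ s, (βhat s).Nonempty)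
    {Q Q' : S → A → ℝ} (h : ∀ s, ∀ a ∈ βhat s, Q s a = Q' s a) :
    greedyValue βhat hβhat Q = greedyValue βhat hβhat Q' :=
  funext fun s => sup'_congr (hβhat s) rfl (h s)

variable [Fintype S]

def backup (P : S → A → S → ℝ) (R : S → A → ℝ) (γ : ℝ) (V : S → ℝ) : S → A → ℝ :=
  fun s a => R s a + γ * ∑ s', P s a s' * V s'

variable {P : S → A → S → ℝ} {R : S → A → ℝ} {γ : ℝ}

theorem dist_backup_le (hγ0 : 0 ≤ γ) (hPpos : ∀ s a s', 0 ≤ P s a s')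
    (hPsum : ∀ s a, ∑ s', P s a s' = 1) (V W : S → ℝ) (s : S) (a : A) :
    dist (backup P R γ V s a) (backup P R γ W s a) ≤ γ * dist V W := by
  rw [backup, backup, dist_add_left, ← smul_eq_mul, ← smul_eq_mul, dist_smul₀,
    Real.norm_of_nonneg hγ0]
  exact mul_le_mul_of_nonneg_left
    (dist_sum_mul_le_of_stochastic (hPpos s a) (hPsum s a) V W) hγ0

theorem continuous_backup_apply (s : S) (a : A) : Continuous fun V => backup P R γ V s a := by
  unfold backup
  fun_prop

theorem contractingWith_greedyValue_comp_backup (hγ0 : 0 ≤ γ) (hγ1 : γ < 1)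
    (hPpos : ∀ s a s', 0 ≤ P s a s') (hPsum : ∀ s a, ∑ s', P s a s' = 1)
    (βhat : S → Finset A) (hβhat : ∀ s, (βhat s).Nonempty) :
    ContractingWith γ.toNNReal (greedyValue βhat hβhat ∘ backup P R γ) := by
  refine ⟨by simpa using hγ1, LipschitzWith.of_dist_le_mul fun V W => ?_⟩
  rw [Real.coe_toNNReal γ hγ0, dist_pi_le_iff (by positivity)]
  exact fun s => dist_sup'_sup'_le (hβhat s) fun a _ => dist_backup_le hγ0 hPpos hPsum V W s a

end InSample

open InSample in
theorem in_sample_operator_fixed_point_general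
    {S A : Type*} [Fintype S]
    (P : S → A → S → ℝ) (R : S → A → ℝ) (γ : ℝ)
    (hγ0 : 0 ≤ γ) (hγ1 : γ < 1)
    (hPpos : ∀ s a s', 0 ≤ P s a s') (hPsum : ∀ s a, ∑ s' : S, P s a s' = 1)
    (βhat : S → Finset A) (hβhat : ∀ s, (βhat s).Nonempty)
    (TIn : (S → A → ℝ) → S → A → ℝ)
    (hTIn : ∀ Q s a, TIn Q s a =
      R s a + γ * ∑ s' : S, P s a s' * (βhat s').sup' (hβhat s') (fun a' => Q s' a')) :
    ∃ QstarIn : S → A → ℝ,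
      (∀ s, ∀ a ∈ βhat s, QstarIn s a = TIn QstarIn s a) ∧
      (∀ Q₁ Q₂ : S → A → ℝ,
        (∀ s, ∀ a ∈ βhat s, Q₁ s a = TIn Q₁ s a) →
        (∀ s, ∀ a ∈ βhat s, Q₂ s a = TIn Q₂ s a) →
        ∀ s, ∀ a ∈ βhat s, Q₁ s a = Q₂ s a) ∧
      (∀ Q0 : S → A → ℝ, ∀ s, ∀ a ∈ βhat s,
        Filter.Tendsto (fun k => TIn^[k] Q0 s a) Filter.atTop (nhds (QstarIn s a))) := by
  have hT : TIn = backup P R γ ∘ greedyValue βhat hβhat := funext₂ fun Q s => funext (hTIn Q s)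
  set F := greedyValue βhat hβhat ∘ backup P R γ
  have hF : ContractingWith γ.toNNReal F :=
    contractingWith_greedyValue_comp_backup hγ0 hγ1 hPpos hPsum βhat hβhat
  set Vstar := hF.fixedPoint
  have hsemiconj : Function.Semiconj (greedyValue βhat hβhat) TIn F := fun Q => by rw [hT]; rfl
  have hfix_unique : ∀ Q : S → A → ℝ, (∀ s, ∀ a ∈ βhat s, Q s a = TIn Q s a) →
      ∀ s, ∀ a ∈ βhat s, Q s a = backup P R γ Vstar s a := by
    intro Q hQ s a ha
    have hV : Function.IsFixedPt F (greedyValue βhat hβhat Q) :=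
      (hsemiconj Q).symm.trans (greedyValue_congr hβhat hQ).symm
    rw [hQ s a ha, hT, Function.comp_apply]
    exact congrFun₂ (congrArg (backup P R γ) (hF.fixedPoint_unique hV)) s a
  refine ⟨backup P R γ Vstar, fun s a _ => ?_, fun Q₁ Q₂ h₁ h₂ s a ha => ?_, fun Q0 s a _ => ?_⟩
  · have hVfix : greedyValue βhat hβhat (backup P R γ Vstar) = Vstar := hF.fixedPoint_isFixedPt
    rw [hT, Function.comp_apply, hVfix]
  · rw [hfix_unique Q₁ h₁ s a ha, hfix_unique Q₂ h₂ s a ha]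
  · have hiter : ∀ k, TIn^[k + 1] Q0 = backup P R γ (F^[k] (greedyValue βhat hβhat Q0)) := by
      intro k
      rw [Function.iterate_succ_apply', ← (hsemiconj.iterate_right k).eq, hT, Function.comp_apply]
    refine (tendsto_add_atTop_iff_nat 1).mp ?_
    simp only [hiter]
    exact ((continuous_backup_apply s a).tendsto Vstar).comp
      (hF.tendsto_iterate_fixedPoint _)

/-- Existence, uniqueness (on the in-sample area), and pointwise convergence of value
iteration to the in-sample optimal value function `Q*_In`, the fixed point of `T_In`. -/
theorem in_sample_operator_fixed_point
    {S A : Type*} [Fintype S] [Nonempty S]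
    (P : S → A → S → ℝ) (R : S → A → ℝ) (γ : ℝ)
    (hγ0 : 0 ≤ γ) (hγ1 : γ < 1)
    (hPpos : ∀ s a s', 0 ≤ P s a s') (hPsum : ∀ s a, ∑ s' : S, P s a s' = 1)
    (βhat : S → Finset A) (hβhat : ∀ s, (βhat s).Nonempty)
    (TIn : (S → A → ℝ) → S → A → ℝ)
    (hTIn : ∀ Q s a, TIn Q s a =
      R s a + γ * ∑ s' : S, P s a s' * (βhat s').sup' (hβhat s') (fun a' => Q s' a')) :
    ∃ QstarIn : S → A → ℝ,
      (∀ s, ∀ a ∈ βhat s, QstarIn s a = TIn QstarIn s a) ∧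
      (∀ Q₁ Q₂ : S → A → ℝ,
        (∀ s, ∀ a ∈ βhat s, Q₁ s a = TIn Q₁ s a) →
        (∀ s, ∀ a ∈ βhat s, Q₂ s a = TIn Q₂ s a) →
        ∀ s, ∀ a ∈ βhat s, Q₁ s a = Q₂ s a) ∧
      (∀ Q0 : S → A → ℝ, ∀ s, ∀ a ∈ βhat s,
        Filter.Tendsto (fun k => TIn^[k] Q0 s a) Filter.atTop (nhds (QstarIn s a))) :=
  in_sample_operator_fixed_point_general P R γ hγ0 hγ1 hPpos hPsum βhat hβhat TIn hTIn
end

section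
/- Let S be a nonempty finite set of states, A a set of actions, P : S × A × S → ℝ with P(s'|s,a) ≥ 0 and ∑_{s'∈S} P(s'|s,a) = 1 for all (s,a), R : S × A → ℝ, and γ ∈ [0,1). Let β̂ and β̃ assign to each state s nonempty finite subsets β̂(s) ⊆ β̃(s) ⊆ A, let λ ∈ [0,1], and define (T_DMG Q)(s,a) = R(s,a) + γ ∑_{s'} P(s'|s,a) · [λ·max_{a'∈β̃(s')} Q(s',a') + (1−λ)·max_{a'∈β̂(s')} Q(s',a')]. Then T_DMG is a γ-contraction on the mild generalization area: for all f₁, f₂ : S × A → ℝ and all B ≥ 0, if |f₁(s,a) − f₂(s,a)| ≤ B for every s ∈ S and every a ∈ β̃(s), then |(T_DMG f₁)(s,a) − (T_DMG f₂)(s,a)| ≤ γ·B for every s ∈ S and every a ∈ β̃(s). -/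
lemma abs_sup'_sub_sup'_le {A : Type*} (t : Finset A) (h : t.Nonempty)
    (g₁ g₂ : A → ℝ) (B : ℝ) (hg : ∀ a ∈ t, |g₁ a - g₂ a| ≤ B) :
    |t.sup' h g₁ - t.sup' h g₂| ≤ B := by
  rw [abs_sub_le_iff]
  constructor <;>
  · rw [sub_le_iff_le_add, Finset.sup'_le_iff]
    intro a ha
    have := hg a ha
    rw [abs_sub_le_iff] at this
    first
    | calc g₁ a ≤ g₂ a + B := by linarith [this.1]
        _ ≤ t.sup' h g₂ + B := by gcongr; exact Finset.le_sup' _ ha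
        _ = B + t.sup' h g₂ := by ring
    | calc g₂ a ≤ g₁ a + B := by linarith [this.2]
        _ ≤ t.sup' h g₁ + B := by gcongr; exact Finset.le_sup' _ ha
        _ = B + t.sup' h g₁ := by ring

/-- The DMG operator `T_DMG` is a `γ`-contraction on the mild generalization area
`{(s,a) | a ∈ β̃(s)}` under the `L∞` norm. -/
theorem dmg_operator_gamma_contraction
    {S A : Type*} [Fintype S] [Nonempty S]
    (P : S → A → S → ℝ) (R : S → A → ℝ) (γ lam : ℝ)
    (hγ0 : 0 ≤ γ) (hγ1 : γ < 1) (hlam0 : 0 ≤ lam) (hlam1 : lam ≤ 1)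
    (hPpos : ∀ s a s', 0 ≤ P s a s') (hPsum : ∀ s a, ∑ s' : S, P s a s' = 1)
    (βhat βtil : S → Finset A)
    (hβhat : ∀ s, (βhat s).Nonempty) (hβtil : ∀ s, (βtil s).Nonempty)
    (hsub : ∀ s, βhat s ⊆ βtil s)
    (TDMG : (S → A → ℝ) → S → A → ℝ)
    (hTDMG : ∀ Q s a, TDMG Q s a =
      R s a + γ * ∑ s' : S, P s a s' *
        (lam * (βtil s').sup' (hβtil s') (fun a' => Q s' a') +
          (1 - lam) * (βhat s').sup' (hβhat s') (fun a' => Q s' a')))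
    (f₁ f₂ : S → A → ℝ) (B : ℝ) (hB : 0 ≤ B)
    (hf : ∀ s, ∀ a ∈ βtil s, |f₁ s a - f₂ s a| ≤ B) :
    ∀ s, ∀ a ∈ βtil s, |TDMG f₁ s a - TDMG f₂ s a| ≤ γ * B := by
  intro s a _
  have key : ∀ s' : S,
      |(lam * (βtil s').sup' (hβtil s') (fun a' => f₁ s' a') +
          (1 - lam) * (βhat s').sup' (hβhat s') (fun a' => f₁ s' a')) -
        (lam * (βtil s').sup' (hβtil s') (fun a' => f₂ s' a') +
          (1 - lam) * (βhat s').sup' (hβhat s') (fun a' => f₂ s' a'))| ≤ B := by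
    intro s'
    have h1 : |(βtil s').sup' (hβtil s') (fun a' => f₁ s' a') -
        (βtil s').sup' (hβtil s') (fun a' => f₂ s' a')| ≤ B :=
      abs_sup'_sub_sup'_le _ _ _ _ _ (fun a' ha' => hf s' a' ha')
    have h2 : |(βhat s').sup' (hβhat s') (fun a' => f₁ s' a') -
        (βhat s').sup' (hβhat s') (fun a' => f₂ s' a')| ≤ B :=
      abs_sup'_sub_sup'_le _ _ _ _ _ (fun a' ha' => hf s' a' (hsub s' ha'))
    calc |(lam * (βtil s').sup' (hβtil s') (fun a' => f₁ s' a') +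
          (1 - lam) * (βhat s').sup' (hβhat s') (fun a' => f₁ s' a')) -
        (lam * (βtil s').sup' (hβtil s') (fun a' => f₂ s' a') +
          (1 - lam) * (βhat s').sup' (hβhat s') (fun a' => f₂ s' a'))|
        = |lam * ((βtil s').sup' (hβtil s') (fun a' => f₁ s' a') -
            (βtil s').sup' (hβtil s') (fun a' => f₂ s' a')) +
          (1 - lam) * ((βhat s').sup' (hβhat s') (fun a' => f₁ s' a') -
            (βhat s').sup' (hβhat s') (fun a' => f₂ s' a'))| := by ring_nf
      _ ≤ lam * |(βtil s').sup' (hβtil s') (fun a' => f₁ s' a') -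
            (βtil s').sup' (hβtil s') (fun a' => f₂ s' a')| +
          (1 - lam) * |(βhat s').sup' (hβhat s') (fun a' => f₁ s' a') -
            (βhat s').sup' (hβhat s') (fun a' => f₂ s' a')| := by
          have h1m : (0:ℝ) ≤ 1 - lam := by linarith
          refine (abs_add_le _ _).trans ?_
          rw [abs_mul, abs_mul, abs_of_nonneg hlam0, abs_of_nonneg h1m]
      _ ≤ lam * B + (1 - lam) * B := by
          have h1m : (0:ℝ) ≤ 1 - lam := by linarith
          gcongr
      _ = B := by ring
  set X₁ : S → ℝ := fun s' => lam * (βtil s').sup' (hβtil s') (fun a' => f₁ s' a') +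
      (1 - lam) * (βhat s').sup' (hβhat s') (fun a' => f₁ s' a') with hX₁
  set X₂ : S → ℝ := fun s' => lam * (βtil s').sup' (hβtil s') (fun a' => f₂ s' a') +
      (1 - lam) * (βhat s').sup' (hβhat s') (fun a' => f₂ s' a') with hX₂
  have heq : TDMG f₁ s a - TDMG f₂ s a = γ * ∑ s' : S, P s a s' * (X₁ s' - X₂ s') := by
    rw [hTDMG, hTDMG]
    simp only [hX₁, hX₂, mul_sub, Finset.sum_sub_distrib]
    ring
  rw [heq, abs_mul, abs_of_nonneg hγ0]
  gcongr
  calc |∑ s' : S, P s a s' * (X₁ s' - X₂ s')| ≤ ∑ s' : S, |P s a s' * (X₁ s' - X₂ s')| :=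
        Finset.abs_sum_le_sum_abs _ _
    _ ≤ ∑ s' : S, P s a s' * B := by
        refine Finset.sum_le_sum fun s' _ => ?_
        rw [abs_mul, abs_of_nonneg (hPpos s a s')]
        exact mul_le_mul_of_nonneg_left (key s') (hPpos s a s')
    _ = B := by rw [← Finset.sum_mul, hPsum, one_mul]
end

section
/- Let S be a nonempty finite set of states, A a set of actions, P : S × A × S → ℝ with P(s'|s,a) ≥ 0 and ∑_{s'∈S} P(s'|s,a) = 1 for all (s,a), R : S × A → ℝ, γ ∈ [0,1), β̂(s) ⊆ β̃(s) ⊆ A nonempty finite subsets for each s, λ ∈ [0,1], and (T_DMG Q)(s,a) = R(s,a) + γ ∑_{s'} P(s'|s,a) · [λ·max_{a'∈β̃(s')} Q(s',a') + (1−λ)·max_{a'∈β̂(s')} Q(s',a')]. Then: (i) there exists a function Q*_DMG : S × A → ℝ satisfying Q*_DMG(s,a) = (T_DMG Q*_DMG)(s,a) for all (s,a) with a ∈ β̃(s); (ii) any two such functions agree at all (s,a) with a ∈ β̃(s); and (iii) for every Q⁰ : S × A → ℝ, the iterates (T_DMG)^k Q⁰ converge to Q*_DMG pointwise on the pairs (s,a)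 with a ∈ β̃(s) as k → ∞. -/
/-- Existence, uniqueness (on the mild generalization area), and pointwise convergence of
value iteration to `Q*_DMG`, the fixed point of the DMG operator `T_DMG`. -/
theorem dmg_operator_fixed_point
    {S A : Type*} [Fintype S] [Nonempty S]
    (P : S → A → S → ℝ) (R : S → A → ℝ) (γ lam : ℝ)
    (hγ0 : 0 ≤ γ) (hγ1 : γ < 1) (hlam0 : 0 ≤ lam) (hlam1 : lam ≤ 1)
    (hPpos : ∀ s a s', 0 ≤ P s a s') (hPsum : ∀ s a, ∑ s' : S, P s a s' = 1)
    (βhat βtil : S → Finset A)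
    (hβhat : ∀ s, (βhat s).Nonempty) (hβtil : ∀ s, (βtil s).Nonempty)
    (hsub : ∀ s, βhat s ⊆ βtil s)
    (TDMG : (S → A → ℝ) → S → A → ℝ)
    (hTDMG : ∀ Q s a, TDMG Q s a =
      R s a + γ * ∑ s' : S, P s a s' *
        (lam * (βtil s').sup' (hβtil s') (fun a' => Q s' a') +
          (1 - lam) * (βhat s').sup' (hβhat s') (fun a' => Q s' a'))) :
    ∃ QstarDMG : S → A → ℝ,
      (∀ s, ∀ a ∈ βtil s, QstarDMG s a = TDMG QstarDMG s a) ∧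
      (∀ Q₁ Q₂ : S → A → ℝ,
        (∀ s, ∀ a ∈ βtil s, Q₁ s a = TDMG Q₁ s a) →
        (∀ s, ∀ a ∈ βtil s, Q₂ s a = TDMG Q₂ s a) →
        ∀ s, ∀ a ∈ βtil s, Q₁ s a = Q₂ s a) ∧
      (∀ Q0 : S → A → ℝ, ∀ s, ∀ a ∈ βtil s,
        Filter.Tendsto (fun k => TDMG^[k] Q0 s a) Filter.atTop (nhds (QstarDMG s a))) := by
  classical
  -- The finite index set of pairs in the mild generalization area.
  set T := Σ s : S, {a : A // a ∈ βtil s} with hT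
  haveI : Nonempty T := by
    obtain ⟨a, ha⟩ := hβtil (Classical.arbitrary S)
    exact ⟨⟨Classical.arbitrary S, ⟨a, ha⟩⟩⟩
  -- extension of a function on T to all of S × A
  set ext : (T → ℝ) → S → A → ℝ :=
    fun f s a => if h : a ∈ βtil s then f ⟨s, ⟨a, h⟩⟩ else 0 with hext
  set F : (T → ℝ) → (T → ℝ) := fun f p => TDMG (ext f) p.1 p.2 with hF
  -- TDMG depends only on values on the mild generalization area
  have hagree : ∀ Q Q' : S → A → ℝ, (∀ s, ∀ a ∈ βtil s, Q s a = Q' s a) →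
      ∀ s a, TDMG Q s a = TDMG Q' s a := by
    intro Q Q' h s a
    rw [hTDMG, hTDMG]
    have h1 : ∀ s', (βtil s').sup' (hβtil s') (fun a' => Q s' a')
        = (βtil s').sup' (hβtil s') (fun a' => Q' s' a') :=
      fun s' => Finset.sup'_congr _ rfl (fun a' ha' => h s' a' ha')
    have h2 : ∀ s', (βhat s').sup' (hβhat s') (fun a' => Q s' a')
        = (βhat s').sup' (hβhat s') (fun a' => Q' s' a') :=
      fun s' => Finset.sup'_congr _ rfl (fun a' ha' => h s' a' (hsub s' ha'))
    simp_rw [h1, h2]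
  have hext_agree : ∀ f : T → ℝ, ∀ s a (ha : a ∈ βtil s), ext f s a = f ⟨s, ⟨a, ha⟩⟩ := by
    intro f s a ha
    simp [hext, ha]
  -- sup' bound
  have hsupb : ∀ (f g : T → ℝ) (s' : S) (t : Finset A) (ht : t.Nonempty),
      t ⊆ βtil s' →
      |t.sup' ht (fun a' => ext f s' a') - t.sup' ht (fun a' => ext g s' a')| ≤ dist f g := by
    intro f g s' t ht hts
    have key : ∀ (u v : T → ℝ),
        t.sup' ht (fun a' => ext u s' a') - t.sup' ht (fun a' => ext v s' a') ≤ dist u v := by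
      intro u v
      rw [sub_le_iff_le_add]
      apply Finset.sup'_le
      intro a' ha'
      have hm : a' ∈ βtil s' := hts ha'
      have h1 : ext u s' a' ≤ ext v s' a' + dist u v := by
        have := dist_le_pi_dist u v (⟨s', ⟨a', hm⟩⟩ : T)
        rw [Real.dist_eq] at this
        have := abs_sub_abs_le_abs_sub (u ⟨s', ⟨a', hm⟩⟩) (v ⟨s', ⟨a', hm⟩⟩)
        simp only [hext, dif_pos hm]
        have h2 := dist_le_pi_dist u v (⟨s', ⟨a', hm⟩⟩ : T)
        rw [Real.dist_eq] at h2
        linarith [le_abs_self (u ⟨s', ⟨a', hm⟩⟩ - v ⟨s', ⟨a', hm⟩⟩)]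
      have h3 := Finset.le_sup' (fun a' => ext v s' a') ha'
      linarith
    rw [abs_sub_le_iff]
    exact ⟨key f g, by rw [dist_comm]; exact key g f⟩
  -- F is a γ-contraction
  set K : NNReal := ⟨γ, hγ0⟩ with hK
  have hlip : LipschitzWith K F := by
    apply LipschitzWith.of_dist_le_mul
    intro f g
    have hKcoe : (K : ℝ) = γ := rfl
    rw [hKcoe]
    rw [dist_pi_le_iff (by positivity)]
    rintro ⟨s, a, ha⟩
    have : F f ⟨s, ⟨a, ha⟩⟩ - F g ⟨s, ⟨a, ha⟩⟩ =
        γ * ∑ s' : S, (P s a s' *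
          (lam * (βtil s').sup' (hβtil s') (fun a' => ext f s' a') +
            (1 - lam) * (βhat s').sup' (hβhat s') (fun a' => ext f s' a'))
        - P s a s' *
          (lam * (βtil s').sup' (hβtil s') (fun a' => ext g s' a') +
            (1 - lam) * (βhat s').sup' (hβhat s') (fun a' => ext g s' a'))) := by
      simp only [hF, hTDMG, Finset.sum_sub_distrib]
      ring
    rw [Real.dist_eq, this, abs_mul, abs_of_nonneg hγ0]
    have hsum : |∑ s' : S, (P s a s' *
          (lam * (βtil s').sup' (hβtil s') (fun a' => ext f s' a') +
            (1 - lam) * (βhat s').sup' (hβhat s') (fun a' => ext f s' a'))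
        - P s a s' *
          (lam * (βtil s').sup' (hβtil s') (fun a' => ext g s' a') +
            (1 - lam) * (βhat s').sup' (hβhat s') (fun a' => ext g s' a')))|
        ≤ dist f g := by
      calc _ ≤ ∑ s' : S, |P s a s' *
          (lam * (βtil s').sup' (hβtil s') (fun a' => ext f s' a') +
            (1 - lam) * (βhat s').sup' (hβhat s') (fun a' => ext f s' a'))
        - P s a s' *
          (lam * (βtil s').sup' (hβtil s') (fun a' => ext g s' a') +
            (1 - lam) * (βhat s').sup' (hβhat s') (fun a' => ext g s' a'))| :=
          Finset.abs_sum_le_sum_abs _ _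
        _ ≤ ∑ s' : S, P s a s' * dist f g := by
          apply Finset.sum_le_sum
          intro s' _
          have e1 : P s a s' *
              (lam * (βtil s').sup' (hβtil s') (fun a' => ext f s' a') +
                (1 - lam) * (βhat s').sup' (hβhat s') (fun a' => ext f s' a'))
            - P s a s' *
              (lam * (βtil s').sup' (hβtil s') (fun a' => ext g s' a') +
                (1 - lam) * (βhat s').sup' (hβhat s') (fun a' => ext g s' a'))
            = P s a s' * (lam * ((βtil s').sup' (hβtil s') (fun a' => ext f s' a')
                - (βtil s').sup' (hβtil s') (fun a' => ext g s' a'))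
              + (1 - lam) * ((βhat s').sup' (hβhat s') (fun a' => ext f s' a')
                - (βhat s').sup' (hβhat s') (fun a' => ext g s' a'))) := by ring
          rw [e1, abs_mul, abs_of_nonneg (hPpos s a s')]
          have b1 := hsupb f g s' (βtil s') (hβtil s') (Finset.Subset.refl _)
          have b2 := hsupb f g s' (βhat s') (hβhat s') (hsub s')
          have : |lam * ((βtil s').sup' (hβtil s') (fun a' => ext f s' a')
                - (βtil s').sup' (hβtil s') (fun a' => ext g s' a'))
              + (1 - lam) * ((βhat s').sup' (hβhat s') (fun a' => ext f s' a')
                - (βhat s').sup' (hβhat s') (fun a' => ext g s' a'))| ≤ dist f g := by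
            calc _ ≤ |lam * ((βtil s').sup' (hβtil s') (fun a' => ext f s' a')
                - (βtil s').sup' (hβtil s') (fun a' => ext g s' a'))|
              + |(1 - lam) * ((βhat s').sup' (hβhat s') (fun a' => ext f s' a')
                - (βhat s').sup' (hβhat s') (fun a' => ext g s' a'))| := abs_add_le _ _
              _ ≤ lam * dist f g + (1 - lam) * dist f g := by
                  rw [abs_mul, abs_mul, abs_of_nonneg hlam0,
                    abs_of_nonneg (by linarith : (0:ℝ) ≤ 1 - lam)]
                  exact add_le_add (mul_le_mul_of_nonneg_left b1 hlam0)
                    (mul_le_mul_of_nonneg_left b2 (by linarith))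
              _ = dist f g := by ring
          exact mul_le_mul_of_nonneg_left this (hPpos s a s')
        _ = dist f g := by rw [← Finset.sum_mul, hPsum, one_mul]
    exact mul_le_mul_of_nonneg_left hsum hγ0
  have hK1 : K < 1 := by
    rw [← NNReal.coe_lt_coe]
    exact hγ1
  have hC : ContractingWith K F := ⟨hK1, hlip⟩
  set fstar : T → ℝ := ContractingWith.fixedPoint F hC with hfstar
  have hfix : F fstar = fstar := hC.fixedPoint_isFixedPt
  refine ⟨ext fstar, ?_, ?_, ?_⟩
  · intro s a ha
    rw [hext_agree fstar s a ha]
    have := congrFun hfix ⟨s, ⟨a, ha⟩⟩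
    rw [← this]
  · intro Q₁ Q₂ h1 h2 s a ha
    have key : ∀ Q : S → A → ℝ, (∀ s, ∀ a ∈ βtil s, Q s a = TDMG Q s a) →
        Function.IsFixedPt F (fun p : T => Q p.1 p.2) := by
      intro Q hQ
      funext p
      obtain ⟨s', ⟨a', ha'⟩⟩ := p
      show TDMG (ext fun p : T => Q p.1 p.2) s' a' = Q s' a'
      rw [hagree _ Q (by
        intro s'' a'' ha''
        exact hext_agree (fun p : T => Q p.1 p.2) s'' a'' ha'')]
      exact (hQ s' a' ha').symm
    have e1 : (fun p : T => Q₁ p.1 p.2) = fstar := hC.fixedPoint_unique (key Q₁ h1)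
    have e2 : (fun p : T => Q₂ p.1 p.2) = fstar := hC.fixedPoint_unique (key Q₂ h2)
    have := congrFun (e1.trans e2.symm) ⟨s, ⟨a, ha⟩⟩
    exact this
  · intro Q0 s a ha
    have hiter : ∀ k : ℕ, (fun p : T => TDMG^[k] Q0 p.1 p.2) = F^[k] (fun p : T => Q0 p.1 p.2) := by
      intro k
      induction k with
      | zero => rfl
      | succ k ih =>
        rw [Function.iterate_succ_apply', Function.iterate_succ_apply', ← ih]
        funext p
        obtain ⟨s', ⟨a', ha'⟩⟩ := p
        show TDMG (TDMG^[k] Q0) s' a' = TDMG (ext fun p : T => TDMG^[k] Q0 p.1 p.2) s' a'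
        exact hagree _ _ (by
          intro s'' a'' ha''
          exact (hext_agree (fun p : T => TDMG^[k] Q0 p.1 p.2) s'' a'' ha'').symm) s' a'
    have htend := hC.tendsto_iterate_fixedPoint (fun p : T => Q0 p.1 p.2)
    have htend2 : Filter.Tendsto (fun k => F^[k] (fun p : T => Q0 p.1 p.2) ⟨s, ⟨a, ha⟩⟩)
        Filter.atTop (nhds (fstar ⟨s, ⟨a, ha⟩⟩)) := by
      exact (tendsto_pi_nhds.mp htend) ⟨s, ⟨a, ha⟩⟩
    rw [hext_agree fstar s a ha]
    convert htend2 using 2 with k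
    rw [← hiter k]
end

section
/- Let S be a nonempty finite set of states, A a set of actions, P : S × A × S → ℝ with P(s'|s,a) ≥ 0 and ∑_{s'∈S} P(s'|s,a) = 1 for all (s,a), R : S × A → ℝ, γ ∈ [0,1), β̂(s) ⊆ β̃(s) ⊆ A nonempty finite subsets for each s, λ ∈ [0,1], and (T_DMG Q)(s,a) = R(s,a) + γ ∑_{s'} P(s'|s,a)·[λ·max_{a'∈β̃(s')} Q(s',a') + (1−λ)·max_{a'∈β̂(s')} Q(s',a')]. Then T_DMG is monotone on the mild generalization area: for all f₁, f₂ : S × A → ℝ, if f₁(s,a) ≥ f₂(s,a) for every s ∈ S and every a ∈ β̃(s), then (T_DMG f₁)(s,a) ≥ (T_DMG f₂)(s,a) for every pair (s,a) ∈ S × A. -/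
open Finset

lemma convex_comb_sup'_mono {A : Type*} {s t : Finset A} (hs : s.Nonempty) (ht : t.Nonempty)
    (hst : s ⊆ t) {lam : ℝ} (hlam0 : 0 ≤ lam) (hlam1 : lam ≤ 1) {f g : A → ℝ}
    (hfg : ∀ a ∈ t, f a ≤ g a) :
    lam * t.sup' ht f + (1 - lam) * s.sup' hs f ≤ lam * t.sup' ht g + (1 - lam) * s.sup' hs g := by
  have hmax_t : t.sup' ht f ≤ t.sup' ht g := sup'_mono_fun hfg
  have hmax_s : s.sup' hs f ≤ s.sup' hs g := sup'_mono_fun fun a ha => hfg a (hst ha)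
  have hweight : 0 ≤ 1 - lam := sub_nonneg.2 hlam1
  gcongr

lemma bellman_backup_mono {S : Type*} [Fintype S] (r : ℝ) {γ : ℝ} (hγ : 0 ≤ γ) {p V W : S → ℝ}
    (hp : ∀ s, 0 ≤ p s) (hVW : ∀ s, V s ≤ W s) :
    r + γ * ∑ s, p s * V s ≤ r + γ * ∑ s, p s * W s := by
  gcongr with s
  · exact hp s
  · exact hVW s

theorem dmg_operator_monotone_general
    {S A : Type*} [Fintype S]
    (P : S → A → S → ℝ) (R : S → A → ℝ) (γ lam : ℝ)
    (hγ0 : 0 ≤ γ) (hlam0 : 0 ≤ lam) (hlam1 : lam ≤ 1)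
    (hPpos : ∀ s a s', 0 ≤ P s a s')
    (βhat βtil : S → Finset A)
    (hβhat : ∀ s, (βhat s).Nonempty) (hβtil : ∀ s, (βtil s).Nonempty)
    (hsub : ∀ s, βhat s ⊆ βtil s)
    (TDMG : (S → A → ℝ) → S → A → ℝ)
    (hTDMG : ∀ Q s a, TDMG Q s a =
      R s a + γ * ∑ s' : S, P s a s' *
        (lam * (βtil s').sup' (hβtil s') (fun a' => Q s' a') +
          (1 - lam) * (βhat s').sup' (hβhat s') (fun a' => Q s' a')))
    (f₁ f₂ : S → A → ℝ)
    (hf : ∀ s, ∀ a ∈ βtil s, f₁ s a ≥ f₂ s a) :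
    ∀ (s : S) (a : A), TDMG f₁ s a ≥ TDMG f₂ s a := by
  intro s a
  rw [hTDMG, hTDMG]
  exact bellman_backup_mono (R s a) hγ0 (hPpos s a) fun s' =>
    convex_comb_sup'_mono (hβhat s') (hβtil s') (hsub s') hlam0 hlam1 (hf s')

/-- Monotonicity of the DMG operator: if `f₁ ≥ f₂` on the mild generalization area, then
`T_DMG f₁ ≥ T_DMG f₂` everywhere. -/
theorem dmg_operator_monotone
    {S A : Type*} [Fintype S] [Nonempty S]
    (P : S → A → S → ℝ) (R : S → A → ℝ) (γ lam : ℝ)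
    (hγ0 : 0 ≤ γ) (hγ1 : γ < 1) (hlam0 : 0 ≤ lam) (hlam1 : lam ≤ 1)
    (hPpos : ∀ s a s', 0 ≤ P s a s') (hPsum : ∀ s a, ∑ s' : S, P s a s' = 1)
    (βhat βtil : S → Finset A)
    (hβhat : ∀ s, (βhat s).Nonempty) (hβtil : ∀ s, (βtil s).Nonempty)
    (hsub : ∀ s, βhat s ⊆ βtil s)
    (TDMG : (S → A → ℝ) → S → A → ℝ)
    (hTDMG : ∀ Q s a, TDMG Q s a =
      R s a + γ * ∑ s' : S, P s a s' *
        (lam * (βtil s').sup' (hβtil s') (fun a' => Q s' a') +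
          (1 - lam) * (βhat s').sup' (hβhat s') (fun a' => Q s' a')))
    (f₁ f₂ : S → A → ℝ)
    (hf : ∀ s, ∀ a ∈ βtil s, f₁ s a ≥ f₂ s a) :
    ∀ (s : S) (a : A), TDMG f₁ s a ≥ TDMG f₂ s a :=
  dmg_operator_monotone_general P R γ lam hγ0 hlam0 hlam1 hPpos βhat βtil hβhat hβtil hsub TDMG
    hTDMG f₁ f₂ hf
end

section
/- Let S be a nonempty finite set of states, A a set of actions, P : S × A × S → ℝ with P(s'|s,a) ≥ 0 and ∑_{s'∈S} P(s'|s,a) = 1 for all (s,a), R : S × A → ℝ, γ ∈ [0,1), β̂(s) ⊆ β̃(s) ⊆ A nonempty finite subsets for each s, and λ ∈ [0,1]. Define (T_In Q)(s,a) = R(s,a) + γ ∑_{s'} P(s'|s,a)·max_{a'∈β̂(s')} Q(s',a') and (T_DMG Q)(s,a) = R(s,a) + γ ∑_{s'} P(s'|s,a)·[λ·max_{a'∈β̃(s')} Q(s',a') + (1−λ)·max_{a'∈β̂(s')} Q(s',a')]. Then for every function f : S × A → ℝ, every positive integer k, every s ∈ S, and every a ∈ β̃(s): ((T_DMG)^k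 f)(s,a) ≥ ((T_In)^k f)(s,a). -/
/-- Iterate domination: for every `f`, every positive `k`, and every `(s,a)` in the mild
generalization area, `((T_DMG)^k f)(s,a) ≥ ((T_In)^k f)(s,a)`. -/
theorem dmg_iterates_ge_in_sample_iterates
    {S A : Type*} [Fintype S] [Nonempty S]
    (P : S → A → S → ℝ) (R : S → A → ℝ) (γ lam : ℝ)
    (hγ0 : 0 ≤ γ) (hγ1 : γ < 1) (hlam0 : 0 ≤ lam) (hlam1 : lam ≤ 1)
    (hPpos : ∀ s a s', 0 ≤ P s a s') (hPsum : ∀ s a, ∑ s' : S, P s a s' = 1)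
    (βhat βtil : S → Finset A)
    (hβhat : ∀ s, (βhat s).Nonempty) (hβtil : ∀ s, (βtil s).Nonempty)
    (hsub : ∀ s, βhat s ⊆ βtil s)
    (TIn TDMG : (S → A → ℝ) → S → A → ℝ)
    (hTIn : ∀ Q s a, TIn Q s a =
      R s a + γ * ∑ s' : S, P s a s' * (βhat s').sup' (hβhat s') (fun a' => Q s' a'))
    (hTDMG : ∀ Q s a, TDMG Q s a =
      R s a + γ * ∑ s' : S, P s a s' *
        (lam * (βtil s').sup' (hβtil s') (fun a' => Q s' a') +
          (1 - lam) * (βhat s').sup' (hβhat s') (fun a' => Q s' a'))) :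
    ∀ (f : S → A → ℝ) (k : ℕ), 1 ≤ k → ∀ s, ∀ a ∈ βtil s,
      TDMG^[k] f s a ≥ TIn^[k] f s a := by
  -- key one-step lemma
  have key : ∀ Q Q' : S → A → ℝ, (∀ s a, Q' s a ≤ Q s a) →
      ∀ s a, TIn Q' s a ≤ TDMG Q s a := by
    intro Q Q' hQQ s a
    rw [hTIn, hTDMG]
    gcongr with s' _
    · exact hPpos s a s'
    · have h1 : (βhat s').sup' (hβhat s') (fun a' => Q' s' a') ≤
          (βhat s').sup' (hβhat s') (fun a' => Q s' a') :=
        Finset.sup'_mono_fun (fun b _ => hQQ s' b)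
      have h2 : (βhat s').sup' (hβhat s') (fun a' => Q s' a') ≤
          (βtil s').sup' (hβtil s') (fun a' => Q s' a') :=
        Finset.sup'_mono _ (hsub s') (hβhat s')
      nlinarith
  -- strengthened: holds for all a
  have main : ∀ (f : S → A → ℝ) (k : ℕ), 1 ≤ k → ∀ s a,
      TIn^[k] f s a ≤ TDMG^[k] f s a := by
    intro f k hk
    induction k with
    | zero => omega
    | succ n ih =>
      rcases Nat.eq_or_lt_of_le hk with h | h
      · simp only [← h]
        simpa using key f f (fun _ _ => le_rfl)
      · have hn : 1 ≤ n := by omega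
        intro s a
        rw [Function.iterate_succ_apply', Function.iterate_succ_apply']
        exact key _ _ (fun s a => ih hn s a) s a
  intro f k hk s a _
  exact main f k hk s a
end

section
/- Let S be a nonempty finite set of states, A a set of actions, P : S × A × S → ℝ with P(s'|s,a) ≥ 0 and ∑_{s'∈S} P(s'|s,a) = 1 for all (s,a), R : S × A → ℝ, γ ∈ [0,1), β̂(s) ⊆ β̃(s) ⊆ A nonempty finite subsets for each s, and λ ∈ [0,1]. Define (T_In Q)(s,a) = R(s,a) + γ ∑_{s'} P(s'|s,a)·max_{a'∈β̂(s')} Q(s',a') and (T_DMG Q)(s,a) = R(s,a) + γ ∑_{s'} P(s'|s,a)·[λ·max_{a'∈β̃(s')} Q(s',a') + (1−λ)·max_{a'∈β̂(s')} Q(s',a')]. Suppose Q*_DMG : S × A → ℝ satisfies Q*_DMG(s,a) = (T_DMG Q*_DMG)(s,a) for all (s,a) with a ∈ β̃(s), and Q*_In : S × A → ℝ satisfies Q*_In(s,a) = (T_In Q*_In)(s,a) for all (s,a) with a ∈ β̂(s). Then Q*_DMG(s,a) ≥ Q*_In(s,a) for every s ∈ S and every a ∈ β̂(s). -/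
/-- Fixed point comparison: the DMG fixed point dominates the in-sample optimal value
function at every in-sample pair `(s,a)` with `a ∈ β̂(s)`. -/
theorem dmg_fixed_point_ge_in_sample_fixed_point
    {S A : Type*} [Fintype S] [Nonempty S]
    (P : S → A → S → ℝ) (R : S → A → ℝ) (γ lam : ℝ)
    (hγ0 : 0 ≤ γ) (hγ1 : γ < 1) (hlam0 : 0 ≤ lam) (hlam1 : lam ≤ 1)
    (hPpos : ∀ s a s', 0 ≤ P s a s') (hPsum : ∀ s a, ∑ s' : S, P s a s' = 1)
    (βhat βtil : S → Finset A)
    (hβhat : ∀ s, (βhat s).Nonempty) (hβtil : ∀ s, (βtil s).Nonempty)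
    (hsub : ∀ s, βhat s ⊆ βtil s)
    (TIn TDMG : (S → A → ℝ) → S → A → ℝ)
    (hTIn : ∀ Q s a, TIn Q s a =
      R s a + γ * ∑ s' : S, P s a s' * (βhat s').sup' (hβhat s') (fun a' => Q s' a'))
    (hTDMG : ∀ Q s a, TDMG Q s a =
      R s a + γ * ∑ s' : S, P s a s' *
        (lam * (βtil s').sup' (hβtil s') (fun a' => Q s' a') +
          (1 - lam) * (βhat s').sup' (hβhat s') (fun a' => Q s' a')))
    (QstarDMG QstarIn : S → A → ℝ)
    (hfixDMG : ∀ s, ∀ a ∈ βtil s, QstarDMG s a = TDMG QstarDMG s a)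
    (hfixIn : ∀ s, ∀ a ∈ βhat s, QstarIn s a = TIn QstarIn s a) :
    ∀ s, ∀ a ∈ βhat s, QstarDMG s a ≥ QstarIn s a := by
  set D : S → A → ℝ := fun s a => QstarIn s a - QstarDMG s a with hD
  have hne : (Finset.univ : Finset S).Nonempty := Finset.univ_nonempty
  set M : ℝ := Finset.univ.sup' hne (fun s => (βhat s).sup' (hβhat s) (fun a => D s a))
    with hM
  have hle : ∀ s, ∀ a ∈ βhat s, D s a ≤ M := by
    intro s a ha
    calc D s a ≤ (βhat s).sup' (hβhat s) (fun a => D s a) := Finset.le_sup' _ ha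
      _ ≤ M := Finset.le_sup' (fun s => (βhat s).sup' (hβhat s) (fun a => D s a)) (Finset.mem_univ s)
  have key : ∀ s, ∀ a ∈ βhat s, D s a ≤ γ * M := by
    intro s a ha
    have hIn := hfixIn s a ha
    have hDMG := hfixDMG s a (hsub s ha)
    have heq : D s a = γ * ∑ s' : S, P s a s' *
        ((βhat s').sup' (hβhat s') (fun a' => QstarIn s' a')
         - (lam * (βtil s').sup' (hβtil s') (fun a' => QstarDMG s' a')
            + (1 - lam) * (βhat s').sup' (hβhat s') (fun a' => QstarDMG s' a'))) := by
      simp only [hD, hIn, hDMG, hTIn, hTDMG, mul_sub, Finset.sum_sub_distrib, mul_sub]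
      ring
    rw [heq]
    have hsum : ∑ s' : S, P s a s' *
        ((βhat s').sup' (hβhat s') (fun a' => QstarIn s' a')
         - (lam * (βtil s').sup' (hβtil s') (fun a' => QstarDMG s' a')
            + (1 - lam) * (βhat s').sup' (hβhat s') (fun a' => QstarDMG s' a'))) ≤ M := by
      calc _ ≤ ∑ s' : S, P s a s' * M := by
              apply Finset.sum_le_sum
              intro s' _
              apply mul_le_mul_of_nonneg_left _ (hPpos s a s')
              have h1 : (βhat s').sup' (hβhat s') (fun a' => QstarDMG s' a')
                  ≤ (βtil s').sup' (hβtil s') (fun a' => QstarDMG s' a') := by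
                apply Finset.sup'_le
                intro a' ha'
                exact Finset.le_sup' _ (hsub s' ha')
              have h2 : (βhat s').sup' (hβhat s') (fun a' => QstarDMG s' a')
                  ≤ lam * (βtil s').sup' (hβtil s') (fun a' => QstarDMG s' a')
                    + (1 - lam) * (βhat s').sup' (hβhat s') (fun a' => QstarDMG s' a') := by
                nlinarith
              have h3 : (βhat s').sup' (hβhat s') (fun a' => QstarIn s' a')
                  ≤ (βhat s').sup' (hβhat s') (fun a' => QstarDMG s' a') + M := by
                apply Finset.sup'_le
                intro a' ha'
                have := hle s' a' ha'
                have h4 : QstarDMG s' a' ≤ (βhat s').sup' (hβhat s') (fun a' => QstarDMG s' a') :=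
                  Finset.le_sup' _ ha'
                simp only [hD] at this
                linarith
              linarith
        _ = M := by rw [← Finset.sum_mul, hPsum, one_mul]
    exact mul_le_mul_of_nonneg_left hsum hγ0
  have hMle : M ≤ γ * M := by
    obtain ⟨s₀, _, hs₀⟩ := Finset.exists_mem_eq_sup' hne
      (fun s => (βhat s).sup' (hβhat s) (fun a => D s a))
    obtain ⟨a₀, ha₀, ha₀'⟩ := Finset.exists_mem_eq_sup' (hβhat s₀) (fun a => D s₀ a)
    have : M = D s₀ a₀ := by rw [hM, hs₀, ha₀']
    linarith [key s₀ a₀ ha₀]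
  have hM0 : M ≤ 0 := by nlinarith
  intro s a ha
  have := hle s a ha
  simp only [hD] at this
  linarith
end

section
/- Let S be a nonempty finite set of states, A a set of actions, P : S × A × S → ℝ with P(s'|s,a) ≥ 0 and ∑_{s'∈S} P(s'|s,a) = 1 for all (s,a), R : S × A → ℝ, γ ∈ [0,1), β̂(s) ⊆ β̃(s) ⊆ A nonempty finite subsets for each s, and λ ∈ [0,1]. Suppose Q*_DMG : S × A → ℝ satisfies Q*_DMG(s,a) = R(s,a) + γ ∑_{s'} P(s'|s,a)·[λ·max_{a'∈β̃(s')} Q*_DMG(s',a') + (1−λ)·max_{a'∈β̂(s')} Q*_DMG(s',a')] for all (s,a) with a ∈ β̃(s), and Q*_In : S × A → ℝ satisfies Q*_In(s,a) = R(s,a) + γ ∑_{s'} P(s'|s,a)·max_{a'∈β̂(s')} Q*_In(s',a') for all (s,a) with a ∈ β̂(s). Then for every state s ∈ S, max_{a∈β̃(s)} Q*_DMG(s,a) ≥ max_{a∈β̂(s)} Q*_In(s,a); that is, the optimal state value induced by the DMG fixed point is at least the in-sample optimal state value at every state. -/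
/-- Performance comparison (Theorem 5): at every state, the optimal state value induced by
the DMG fixed point is at least the in-sample optimal state value:
`max_{a∈β̃(s)} Q*_DMG(s,a) ≥ max_{a∈β̂(s)} Q*_In(s,a)`. -/
theorem dmg_state_value_ge_in_sample_state_value
    {S A : Type*} [Fintype S] [Nonempty S]
    (P : S → A → S → ℝ) (R : S → A → ℝ) (γ lam : ℝ)
    (hγ0 : 0 ≤ γ) (hγ1 : γ < 1) (hlam0 : 0 ≤ lam) (hlam1 : lam ≤ 1)
    (hPpos : ∀ s a s', 0 ≤ P s a s') (hPsum : ∀ s a, ∑ s' : S, P s a s' = 1)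
    (βhat βtil : S → Finset A)
    (hβhat : ∀ s, (βhat s).Nonempty) (hβtil : ∀ s, (βtil s).Nonempty)
    (hsub : ∀ s, βhat s ⊆ βtil s)
    (QstarDMG QstarIn : S → A → ℝ)
    (hfixDMG : ∀ s, ∀ a ∈ βtil s, QstarDMG s a =
      R s a + γ * ∑ s' : S, P s a s' *
        (lam * (βtil s').sup' (hβtil s') (fun a' => QstarDMG s' a') +
          (1 - lam) * (βhat s').sup' (hβhat s') (fun a' => QstarDMG s' a')))
    (hfixIn : ∀ s, ∀ a ∈ βhat s, QstarIn s a =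
      R s a + γ * ∑ s' : S, P s a s' *
        (βhat s').sup' (hβhat s') (fun a' => QstarIn s' a')) :
    ∀ s : S, (βtil s).sup' (hβtil s) (fun a => QstarDMG s a) ≥
      (βhat s).sup' (hβhat s) (fun a => QstarIn s a) := by
  classical
  -- value functions
  set VIn : S → ℝ := fun s => (βhat s).sup' (hβhat s) (fun a => QstarIn s a) with hVIndef
  set Vh : S → ℝ := fun s => (βhat s).sup' (hβhat s) (fun a => QstarDMG s a) with hVhdef
  set Vt : S → ℝ := fun s => (βtil s).sup' (hβtil s) (fun a => QstarDMG s a) with hVtdef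
  have hVIn : ∀ s, (βhat s).sup' (hβhat s) (fun a => QstarIn s a) = VIn s := fun _ => rfl
  have hVh : ∀ s, (βhat s).sup' (hβhat s) (fun a => QstarDMG s a) = Vh s := fun _ => rfl
  have hVt : ∀ s, (βtil s).sup' (hβtil s) (fun a => QstarDMG s a) = Vt s := fun _ => rfl
  simp only [hVIn, hVh, hVt] at hfixDMG hfixIn ⊢
  have hVhVt : ∀ s, Vh s ≤ Vt s := fun s =>
    Finset.sup'_le _ _ (fun a ha => Finset.le_sup' (fun a => QstarDMG s a) (hsub s ha))
  obtain ⟨s₀, -, hs₀⟩ := Finset.exists_max_image (Finset.univ : Finset S)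
      (fun s => VIn s - Vh s) Finset.univ_nonempty
  set M := VIn s₀ - Vh s₀ with hM
  have hle : ∀ s, VIn s - Vh s ≤ M := fun s => hs₀ s (Finset.mem_univ s)
  have hM0 : M ≤ 0 := by
    obtain ⟨a₀, ha₀, hQa₀⟩ := Finset.exists_mem_eq_sup' (hβhat s₀) (fun a => QstarIn s₀ a)
    have ha₀t : a₀ ∈ βtil s₀ := hsub s₀ ha₀
    have h1 : QstarDMG s₀ a₀ ≤ Vh s₀ := Finset.le_sup' (fun a => QstarDMG s₀ a) ha₀
    have hdiff : QstarIn s₀ a₀ - QstarDMG s₀ a₀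
        = γ * ∑ s' : S, P s₀ a₀ s' * (VIn s' - (lam * Vt s' + (1 - lam) * Vh s')) := by
      rw [hfixIn s₀ a₀ ha₀, hfixDMG s₀ a₀ ha₀t,
        show (∑ s' : S, P s₀ a₀ s' * (VIn s' - (lam * Vt s' + (1 - lam) * Vh s')))
          = (∑ s' : S, P s₀ a₀ s' * VIn s')
            - ∑ s' : S, P s₀ a₀ s' * (lam * Vt s' + (1 - lam) * Vh s') from by
          rw [← Finset.sum_sub_distrib]; exact Finset.sum_congr rfl (fun _ _ => by ring)]
      ring
    have hsumle : ∑ s' : S, P s₀ a₀ s' * (VIn s' - (lam * Vt s' + (1 - lam) * Vh s'))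
        ≤ ∑ s' : S, P s₀ a₀ s' * M := by
      refine Finset.sum_le_sum (fun s' _ => ?_)
      refine mul_le_mul_of_nonneg_left ?_ (hPpos _ _ _)
      have h2 := hVhVt s'
      have h3 := hle s'
      nlinarith
    have hsumM : ∑ s' : S, P s₀ a₀ s' * M = M := by
      rw [← Finset.sum_mul, hPsum, one_mul]
    have hMγ : M ≤ γ * M := by
      calc M = VIn s₀ - Vh s₀ := hM
        _ ≤ QstarIn s₀ a₀ - QstarDMG s₀ a₀ := by
            have : VIn s₀ = QstarIn s₀ a₀ := hQa₀
            linarith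
        _ = γ * ∑ s' : S, P s₀ a₀ s' * (VIn s' - (lam * Vt s' + (1 - lam) * Vh s')) := hdiff
        _ ≤ γ * ∑ s' : S, P s₀ a₀ s' * M := by
            exact mul_le_mul_of_nonneg_left hsumle hγ0
        _ = γ * M := by rw [hsumM]
    nlinarith
  intro s
  have := hle s
  have := hVhVt s
  linarith
end

section
/- Let S be a nonempty finite set of states, A a metric space of actions, P : S × A × S → ℝ with P(s'|s,a) ≥ 0 and ∑_{s'∈S} P(s'|s,a) = 1 for all (s,a), R : S × A → ℝ, γ ∈ [0,1), λ ∈ [0,1], and for each s let β̂(s) ⊆ β̃(s) ⊆ A be nonempty finite subsets satisfying the ε_a-closeness condition: for every s and every a₁ ∈ β̃(s) there exists a₂ ∈ β̂(s) with dist(a₁,a₂) ≤ ε_a. Define (T_In Q)(s,a) = R(s,a) + γ ∑_{s'} P(s'|s,a)·max_{a'∈β̂(s')} Q(s',a') and (T_DMG Q)(s,a) = R(s,a) + γ ∑_{s'} P(s'|s,a)·[λ·max_{a'∈β̃(s')} Q(s',a') + (1−λ)·max_{a'∈β̂(s')} Q(s',a')]. Then for every f : S × A → ℝ that is K_Q-Lipschitz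 in the action (|f(s,a₁) − f(s,a₂)| ≤ K_Q·dist(a₁,a₂) for all s, a₁, a₂, K_Q ≥ 0), and for every s ∈ S and a ∈ β̂(s): (T_In f)(s,a) ≤ (T_DMG f)(s,a) ≤ (T_In f)(s,a) + γ·λ·ε_a·K_Q. -/
/-!
Let `M̂ s'` and `M̃ s'` be the maxima of `f s'` over `β̂ s'` and `β̃ s'`. Then `M̂ ≤ M̃` because
`β̂ ⊆ β̃`, and `M̃ ≤ M̂ + K_Q ε_a` because every action of `β̃` is `ε_a`-close to one of `β̂` and
`f` is `K_Q`-Lipschitz in the action. Hence the DMG target `λ M̃ + (1 - λ) M̂ = M̂ + λ (M̃ - M̂)`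
lies between `M̂` and `M̂ + λ K_Q ε_a`; averaging over `P` and scaling by `γ` gives the sandwich.
-/

open Finset

theorem le_mix_of_le {x y lam : ℝ} (hlam : 0 ≤ lam) (hxy : x ≤ y) :
    x ≤ lam * y + (1 - lam) * x := by
  nlinarith

theorem mix_le_add_of_le_add {x y δ lam : ℝ} (hlam : 0 ≤ lam) (hyx : y ≤ x + δ) :
    lam * y + (1 - lam) * x ≤ x + lam * δ := by
  nlinarith

theorem Finset.sup'_le_sup'_add_of_forall_exists_le_add {ι α : Type*} [SemilatticeSup α]
    [Add α] [AddRightMono α] {s t : Finset ι} (hs : s.Nonempty) (ht : t.Nonempty)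
    {f : ι → α} {c : α} (h : ∀ b ∈ t, ∃ a ∈ s, f b ≤ f a + c) :
    t.sup' ht f ≤ s.sup' hs f + c :=
  sup'_le _ _ fun b hb => by
    obtain ⟨a, ha, hba⟩ := h b hb
    exact hba.trans (by gcongr; exact le_sup' f ha)

theorem Finset.sup'_le_sup'_add_mul_of_forall_exists_dist_le {A : Type*} [PseudoMetricSpace A]
    {s t : Finset A} (hs : s.Nonempty) (ht : t.Nonempty) {f : A → ℝ} {K ε : ℝ} (hK : 0 ≤ K)
    (hf : ∀ a₁ a₂, f a₁ - f a₂ ≤ K * dist a₁ a₂)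
    (hclose : ∀ a₁ ∈ t, ∃ a₂ ∈ s, dist a₁ a₂ ≤ ε) :
    t.sup' ht f ≤ s.sup' hs f + K * ε :=
  sup'_le_sup'_add_of_forall_exists_le_add hs ht fun a₁ ha₁ => by
    obtain ⟨a₂, ha₂, hd⟩ := hclose a₁ ha₁
    refine ⟨a₂, ha₂, ?_⟩
    linarith [hf a₁ a₂, mul_le_mul_of_nonneg_left hd hK]

theorem Finset.sum_mul_le_sum_mul_add_of_le_add {ι : Type*} (s : Finset ι) {p g h : ι → ℝ}
    {c : ℝ} (hp : ∀ i ∈ s, 0 ≤ p i) (hp1 : ∑ i ∈ s, p i = 1) (hgh : ∀ i ∈ s, g i ≤ h i + c) :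
    ∑ i ∈ s, p i * g i ≤ ∑ i ∈ s, p i * h i + c :=
  calc ∑ i ∈ s, p i * g i ≤ ∑ i ∈ s, p i * (h i + c) :=
        sum_le_sum fun i hi => mul_le_mul_of_nonneg_left (hgh i hi) (hp i hi)
    _ = ∑ i ∈ s, p i * h i + c := by
      simp only [mul_add, sum_add_distrib, ← sum_mul, hp1, one_mul]

theorem dmg_one_step_sandwich_general
    {S A : Type*} [Fintype S] [MetricSpace A]
    (P : S → A → S → ℝ) (R : S → A → ℝ) (γ lam : ℝ)
    (hγ0 : 0 ≤ γ) (hlam0 : 0 ≤ lam)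
    (hPpos : ∀ s a s', 0 ≤ P s a s') (hPsum : ∀ s a, ∑ s' : S, P s a s' = 1)
    (βhat βtil : S → Finset A)
    (hβhat : ∀ s, (βhat s).Nonempty) (hβtil : ∀ s, (βtil s).Nonempty)
    (hsub : ∀ s, βhat s ⊆ βtil s)
    (εa : ℝ)
    (hclose : ∀ s, ∀ a₁ ∈ βtil s, ∃ a₂ ∈ βhat s, dist a₁ a₂ ≤ εa)
    (TIn TDMG : (S → A → ℝ) → S → A → ℝ)
    (hTIn : ∀ Q s a, TIn Q s a =
      R s a + γ * ∑ s' : S, P s a s' * (βhat s').sup' (hβhat s') (fun a' => Q s' a'))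
    (hTDMG : ∀ Q s a, TDMG Q s a =
      R s a + γ * ∑ s' : S, P s a s' *
        (lam * (βtil s').sup' (hβtil s') (fun a' => Q s' a') +
          (1 - lam) * (βhat s').sup' (hβhat s') (fun a' => Q s' a'))) :
    ∀ (f : S → A → ℝ) (K_Q : ℝ), 0 ≤ K_Q →
      (∀ s a₁ a₂, |f s a₁ - f s a₂| ≤ K_Q * dist a₁ a₂) →
      ∀ s, ∀ a ∈ βhat s,
        TIn f s a ≤ TDMG f s a ∧ TDMG f s a ≤ TIn f s a + γ * lam * εa * K_Q := by
  intro f K_Q hK hLip s a _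
  have hhat_le_til : ∀ s', (βhat s').sup' (hβhat s') (f s') ≤ (βtil s').sup' (hβtil s') (f s') :=
    fun s' => sup'_mono _ (hsub s') _
  have htil_le_hat : ∀ s',
      (βtil s').sup' (hβtil s') (f s') ≤ (βhat s').sup' (hβhat s') (f s') + K_Q * εa :=
    fun s' => sup'_le_sup'_add_mul_of_forall_exists_dist_le _ _ hK
      (fun a₁ a₂ => (le_abs_self _).trans (hLip s' a₁ a₂)) (hclose s')
  rw [hTIn, hTDMG]
  constructor
  · gcongr with s'
    · exact hPpos s a s'
    · exact le_mix_of_le hlam0 (hhat_le_til s')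
  · have hsum := sum_mul_le_sum_mul_add_of_le_add univ (fun s' _ => hPpos s a s') (hPsum s a)
      fun s' _ => mix_le_add_of_le_add hlam0 (htil_le_hat s')
    linarith [mul_le_mul_of_nonneg_left hsum hγ0]

/-- One-step sandwich bound under worst-case generalization: for `f` Lipschitz in the action
and any in-sample pair `(s,a)`, `(T_In f)(s,a) ≤ (T_DMG f)(s,a) ≤ (T_In f)(s,a) + γ·λ·ε_a·K_Q`. -/
theorem dmg_one_step_sandwich
    {S A : Type*} [Fintype S] [Nonempty S] [MetricSpace A]
    (P : S → A → S → ℝ) (R : S → A → ℝ) (γ lam : ℝ)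
    (hγ0 : 0 ≤ γ) (hγ1 : γ < 1) (hlam0 : 0 ≤ lam) (hlam1 : lam ≤ 1)
    (hPpos : ∀ s a s', 0 ≤ P s a s') (hPsum : ∀ s a, ∑ s' : S, P s a s' = 1)
    (βhat βtil : S → Finset A)
    (hβhat : ∀ s, (βhat s).Nonempty) (hβtil : ∀ s, (βtil s).Nonempty)
    (hsub : ∀ s, βhat s ⊆ βtil s)
    (εa : ℝ)
    (hclose : ∀ s, ∀ a₁ ∈ βtil s, ∃ a₂ ∈ βhat s, dist a₁ a₂ ≤ εa)
    (TIn TDMG : (S → A → ℝ) → S → A → ℝ)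
    (hTIn : ∀ Q s a, TIn Q s a =
      R s a + γ * ∑ s' : S, P s a s' * (βhat s').sup' (hβhat s') (fun a' => Q s' a'))
    (hTDMG : ∀ Q s a, TDMG Q s a =
      R s a + γ * ∑ s' : S, P s a s' *
        (lam * (βtil s').sup' (hβtil s') (fun a' => Q s' a') +
          (1 - lam) * (βhat s').sup' (hβhat s') (fun a' => Q s' a'))) :
    ∀ (f : S → A → ℝ) (K_Q : ℝ), 0 ≤ K_Q →
      (∀ s a₁ a₂, |f s a₁ - f s a₂| ≤ K_Q * dist a₁ a₂) →
      ∀ s, ∀ a ∈ βhat s,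
        TIn f s a ≤ TDMG f s a ∧ TDMG f s a ≤ TIn f s a + γ * lam * εa * K_Q :=
  dmg_one_step_sandwich_general P R γ lam hγ0 hlam0 hPpos hPsum βhat βtil hβhat hβtil hsub εa hclose
    TIn TDMG hTIn hTDMG
end

section
/- Let S be a nonempty finite set of states, A a metric space of actions, P : S × A × S → ℝ with P(s'|s,a) ≥ 0 and ∑_{s'∈S} P(s'|s,a) = 1 for all (s,a), R : S × A → ℝ, γ ∈ [0,1), λ ∈ [0,1], and for each s let β̂(s) ⊆ β̃(s) ⊆ A be nonempty finite subsets satisfying the ε_a-closeness condition: for every s and every a₁ ∈ β̃(s) there exists a₂ ∈ β̂(s) with dist(a₁,a₂) ≤ ε_a. Define (T_In Q)(s,a) = R(s,a) + γ ∑_{s'} P(s'|s,a)·max_{a'∈β̂(s')} Q(s',a') and (T_DMG Q)(s,a) = R(s,a) + γ ∑_{s'} P(s'|s,a)·[λ·max_{a'∈β̃(s')} Q(s',a') + (1−λ)·max_{a'∈β̂(s')} Q(s',a')]. Let (Q̂^k)_{k≥0} and (Q^k)_{k≥0} be sequences of functions S × A → ℝ such that: Q̂⁰ = Q⁰; every Q̂^k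 is K_Q-Lipschitz in the action (|Q̂^k(s,a₁) − Q̂^k(s,a₂)| ≤ K_Q·dist(a₁,a₂) for all s, a₁, a₂, with K_Q ≥ 0); and for every k ≥ 1, Q̂^k(s,a) = (T_DMG Q̂^{k−1})(s,a) and Q^k(s,a) = (T_In Q^{k−1})(s,a) for all (s,a) with a ∈ β̂(s). Then for every k ≥ 1, every s ∈ S, and every a ∈ β̂(s): Q^k(s,a) ≤ Q̂^k(s,a) ≤ Q^k(s,a) + (λ·ε_a·K_Q·γ/(1−γ))·(1 − γ^k). -/
/-!
At in-sample pairs both iterations only read in-sample values of the previous iterate. If there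
`Q^k ≤ Q̂^k ≤ Q^k + d`, the in-sample maxima obey the same sandwich, while Lipschitz continuity
and `ε_a`-closeness bound the maximum of `Q̂^k` over `β̃` by its in-sample maximum plus
`K_Q ε_a`; so the DMG target exceeds the in-sample target by at most `d + λ ε_a K_Q`, and a
backup turns the gap `d` into `γ (d + λ ε_a K_Q)`. Starting from `d = 0`, this recursion is
solved by `λ ε_a K_Q γ (1 - γ^k) / (1 - γ)`.
-/

open Finset

namespace Finset

variable {ι α : Type*} [LinearOrder α] [Add α] [AddRightMono α]

theorem sup'_le_sup'_add_of_forall_exists {s t : Finset ι} (hs : s.Nonempty) (ht : t.Nonempty)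
    {f g : ι → α} {c : α} (h : ∀ i ∈ t, ∃ j ∈ s, g i ≤ f j + c) :
    t.sup' ht g ≤ s.sup' hs f + c :=
  sup'_le ht g fun i hi =>
    let ⟨_, hj, hij⟩ := h i hi
    hij.trans (add_le_add_left (le_sup' f hj) c)

theorem sup'_le_sup'_add_of_le_add {s : Finset ι} (hs : s.Nonempty) {f g : ι → α} {c : α}
    (h : ∀ i ∈ s, g i ≤ f i + c) : s.sup' hs g ≤ s.sup' hs f + c :=
  sup'_le_sup'_add_of_forall_exists hs hs fun i hi => ⟨i, hi, h i hi⟩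

theorem sup'_le_sup'_add_mul_of_lipschitz {A : Type*} [PseudoMetricSpace A] {s t : Finset A}
    (hs : s.Nonempty) (ht : t.Nonempty) {f : A → ℝ} {K ε : ℝ} (hK : 0 ≤ K)
    (hf : ∀ a₁ a₂, |f a₁ - f a₂| ≤ K * dist a₁ a₂)
    (hclose : ∀ a₁ ∈ t, ∃ a₂ ∈ s, dist a₁ a₂ ≤ ε) :
    t.sup' ht f ≤ s.sup' hs f + K * ε :=
  sup'_le_sup'_add_of_forall_exists hs ht fun a₁ ha₁ =>
    let ⟨a₂, ha₂, hd⟩ := hclose a₁ ha₁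
    ⟨a₂, ha₂, by
      linarith [(abs_sub_le_iff.1 (hf a₁ a₂)).1, mul_le_mul_of_nonneg_left hd hK]⟩

end Finset

theorem sum_mul_le_sum_mul_add {ι : Type*} [Fintype ι] {p u v : ι → ℝ} {c : ℝ}
    (hp : ∀ i, 0 ≤ p i) (hp1 : ∑ i, p i = 1) (h : ∀ i, v i ≤ u i + c) :
    ∑ i, p i * v i ≤ ∑ i, p i * u i + c :=
  calc ∑ i, p i * v i ≤ ∑ i, p i * (u i + c) :=
        sum_le_sum fun i _ => mul_le_mul_of_nonneg_left (h i) (hp i)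
    _ = ∑ i, p i * u i + c := by simp only [mul_add, sum_add_distrib, ← sum_mul, hp1, one_mul]

theorem discounted_backup_sandwich {ι : Type*} [Fintype ι] {p u v : ι → ℝ} {r γ c : ℝ}
    (hγ : 0 ≤ γ) (hp : ∀ i, 0 ≤ p i) (hp1 : ∑ i, p i = 1)
    (h : ∀ i, u i ≤ v i ∧ v i ≤ u i + c) :
    r + γ * ∑ i, p i * u i ≤ r + γ * ∑ i, p i * v i ∧
      r + γ * ∑ i, p i * v i ≤ r + γ * ∑ i, p i * u i + γ * c := by
  have hlo : γ * ∑ i, p i * u i ≤ γ * ∑ i, p i * v i :=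
    mul_le_mul_of_nonneg_left (sum_le_sum fun i _ => mul_le_mul_of_nonneg_left (h i).1 (hp i)) hγ
  have hhi := mul_le_mul_of_nonneg_left (sum_mul_le_sum_mul_add hp hp1 fun i => (h i).2) hγ
  constructor <;> linarith

theorem dmg_target_sandwich {A : Type*} [PseudoMetricSpace A] {s t : Finset A}
    (hs : s.Nonempty) (ht : t.Nonempty) (hst : s ⊆ t) {u v : A → ℝ} {lam d K ε : ℝ}
    (hlam : 0 ≤ lam) (hK : 0 ≤ K) (hv : ∀ a₁ a₂, |v a₁ - v a₂| ≤ K * dist a₁ a₂)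
    (hclose : ∀ a₁ ∈ t, ∃ a₂ ∈ s, dist a₁ a₂ ≤ ε)
    (h : ∀ a ∈ s, u a ≤ v a ∧ v a ≤ u a + d) :
    s.sup' hs u ≤ lam * t.sup' ht v + (1 - lam) * s.sup' hs v ∧
      lam * t.sup' ht v + (1 - lam) * s.sup' hs v ≤ s.sup' hs u + (d + lam * ε * K) := by
  have hlo : s.sup' hs u ≤ s.sup' hs v := sup'_mono_fun fun a ha => (h a ha).1
  have hgap : s.sup' hs v ≤ s.sup' hs u + d :=
    sup'_le_sup'_add_of_le_add hs fun a ha => (h a ha).2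
  have hsub : s.sup' hs v ≤ t.sup' ht v := sup'_mono v hst hs
  have hgen : t.sup' ht v ≤ s.sup' hs v + K * ε :=
    sup'_le_sup'_add_mul_of_lipschitz hs ht hK hv hclose
  have hmix_lo : 0 ≤ lam * (t.sup' ht v - s.sup' hs v) := mul_nonneg hlam (by linarith)
  have hmix_hi : lam * (t.sup' ht v - s.sup' hs v) ≤ lam * (K * ε) :=
    mul_le_mul_of_nonneg_left (by linarith) hlam
  constructor <;> linarith

theorem geom_gap_succ {γ : ℝ} (hγ : γ ≠ 1) (c : ℝ) (k : ℕ) :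
    γ * (c * γ / (1 - γ) * (1 - γ ^ k) + c) = c * γ / (1 - γ) * (1 - γ ^ (k + 1)) := by
  field_simp [sub_ne_zero.2 hγ.symm]
  ring

theorem dmg_limited_overestimation_general
    {S A : Type*} [Fintype S] [MetricSpace A]
    (P : S → A → S → ℝ) (R : S → A → ℝ) (γ lam : ℝ)
    (hγ0 : 0 ≤ γ) (hγ1 : γ < 1) (hlam0 : 0 ≤ lam)
    (hPpos : ∀ s a s', 0 ≤ P s a s') (hPsum : ∀ s a, ∑ s' : S, P s a s' = 1)
    (βhat βtil : S → Finset A)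
    (hβhat : ∀ s, (βhat s).Nonempty) (hβtil : ∀ s, (βtil s).Nonempty)
    (hsub : ∀ s, βhat s ⊆ βtil s)
    (εa : ℝ)
    (hclose : ∀ s, ∀ a₁ ∈ βtil s, ∃ a₂ ∈ βhat s, dist a₁ a₂ ≤ εa)
    (TIn TDMG : (S → A → ℝ) → S → A → ℝ)
    (hTIn : ∀ Q s a, TIn Q s a =
      R s a + γ * ∑ s' : S, P s a s' * (βhat s').sup' (hβhat s') (fun a' => Q s' a'))
    (hTDMG : ∀ Q s a, TDMG Q s a =
      R s a + γ * ∑ s' : S, P s a s' *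
        (lam * (βtil s').sup' (hβtil s') (fun a' => Q s' a') +
          (1 - lam) * (βhat s').sup' (hβhat s') (fun a' => Q s' a')))
    (K_Q : ℝ) (hKQ : 0 ≤ K_Q)
    (Qhat Qin : ℕ → S → A → ℝ)
    (hinit : Qhat 0 = Qin 0)
    (hlip : ∀ k s a₁ a₂, |Qhat k s a₁ - Qhat k s a₂| ≤ K_Q * dist a₁ a₂)
    (hrecDMG : ∀ k, 1 ≤ k → ∀ s, ∀ a ∈ βhat s, Qhat k s a = TDMG (Qhat (k - 1)) s a)
    (hrecIn : ∀ k, 1 ≤ k → ∀ s, ∀ a ∈ βhat s, Qin k s a = TIn (Qin (k - 1)) s a) :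
    ∀ k, 1 ≤ k → ∀ s, ∀ a ∈ βhat s,
      Qin k s a ≤ Qhat k s a ∧
      Qhat k s a ≤ Qin k s a + lam * εa * K_Q * γ / (1 - γ) * (1 - γ ^ k) := by
  suffices h : ∀ k s, ∀ a ∈ βhat s, Qin k s a ≤ Qhat k s a ∧
      Qhat k s a ≤ Qin k s a + lam * εa * K_Q * γ / (1 - γ) * (1 - γ ^ k) from
    fun k _ => h k
  intro k
  induction k with
  | zero => intro s a _; simp [hinit]
  | succ k ih =>
    intro s a ha
    rw [hrecDMG (k + 1) (Nat.le_add_left 1 k) s a ha, hrecIn (k + 1) (Nat.le_add_left 1 k) s a ha,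
      Nat.add_sub_cancel, hTIn, hTDMG, ← geom_gap_succ hγ1.ne (lam * εa * K_Q) k]
    exact discounted_backup_sandwich hγ0 (hPpos s a) (hPsum s a) fun s' =>
      dmg_target_sandwich (hβhat s') (hβtil s') (hsub s') hlam0 hKQ (hlip k s') (hclose s')
        fun a' ha' => ih s' a' ha'

/-- Limited overestimation (Theorem 6): under worst-case generalization, the DMG iterates
`Q̂^k` are sandwiched at in-sample pairs between the in-sample iterates `Q^k` and
`Q^k + (λ·ε_a·K_Q·γ/(1−γ))·(1−γ^k)`. -/
theorem dmg_limited_overestimation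
    {S A : Type*} [Fintype S] [Nonempty S] [MetricSpace A]
    (P : S → A → S → ℝ) (R : S → A → ℝ) (γ lam : ℝ)
    (hγ0 : 0 ≤ γ) (hγ1 : γ < 1) (hlam0 : 0 ≤ lam) (hlam1 : lam ≤ 1)
    (hPpos : ∀ s a s', 0 ≤ P s a s') (hPsum : ∀ s a, ∑ s' : S, P s a s' = 1)
    (βhat βtil : S → Finset A)
    (hβhat : ∀ s, (βhat s).Nonempty) (hβtil : ∀ s, (βtil s).Nonempty)
    (hsub : ∀ s, βhat s ⊆ βtil s)
    (εa : ℝ)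
    (hclose : ∀ s, ∀ a₁ ∈ βtil s, ∃ a₂ ∈ βhat s, dist a₁ a₂ ≤ εa)
    (TIn TDMG : (S → A → ℝ) → S → A → ℝ)
    (hTIn : ∀ Q s a, TIn Q s a =
      R s a + γ * ∑ s' : S, P s a s' * (βhat s').sup' (hβhat s') (fun a' => Q s' a'))
    (hTDMG : ∀ Q s a, TDMG Q s a =
      R s a + γ * ∑ s' : S, P s a s' *
        (lam * (βtil s').sup' (hβtil s') (fun a' => Q s' a') +
          (1 - lam) * (βhat s').sup' (hβhat s') (fun a' => Q s' a')))
    (K_Q : ℝ) (hKQ : 0 ≤ K_Q)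
    (Qhat Qin : ℕ → S → A → ℝ)
    (hinit : Qhat 0 = Qin 0)
    (hlip : ∀ k s a₁ a₂, |Qhat k s a₁ - Qhat k s a₂| ≤ K_Q * dist a₁ a₂)
    (hrecDMG : ∀ k, 1 ≤ k → ∀ s, ∀ a ∈ βhat s, Qhat k s a = TDMG (Qhat (k - 1)) s a)
    (hrecIn : ∀ k, 1 ≤ k → ∀ s, ∀ a ∈ βhat s, Qin k s a = TIn (Qin (k - 1)) s a) :
    ∀ k, 1 ≤ k → ∀ s, ∀ a ∈ βhat s,
      Qin k s a ≤ Qhat k s a ∧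
      Qhat k s a ≤ Qin k s a + lam * εa * K_Q * γ / (1 - γ) * (1 - γ ^ k) :=
  dmg_limited_overestimation_general P R γ lam hγ0 hγ1 hlam0 hPpos hPsum βhat βtil hβhat hβtil hsub
    εa hclose TIn TDMG hTIn hTDMG K_Q hKQ Qhat Qin hinit hlip hrecDMG hrecIn
end

section
/- Let A be a metric space of actions, γ ∈ [0,1), λ ∈ [0,1], ε_a ≥ 0, K_Q ≥ 0, and fix a state s with nonempty finite action subsets β̂(s) ⊆ β̃(s) ⊆ A. Let Q_In : A → ℝ be any function (the in-sample optimal Q-values at s), and let Q̂ : A → ℝ be K_Q-Lipschitz (|Q̂(a₁) − Q̂(a₂)| ≤ K_Q·dist(a₁,a₂) for all a₁, a₂) and satisfy the sandwich bound Q_In(a) ≤ Q̂(a) ≤ Q_In(a) + λ·ε_a·K_Q·γ/(1−γ) for every a ∈ β̂(s). Suppose â ∈ β̃(s) maximizes Q̂ over β̃(s) (Q̂(â) ≥ Q̂(a) for all a ∈ β̃(s)), and a_in ∈ β̂(s) satisfies dist(â, a_in) ≤ ε_a. Then max_{a∈β̂(s)} Q_In(a) − Q_In(a_in) ≤ K_Q·ε_a·(1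 − γ + λγ)/(1 − γ); in particular, if ε_a < (1−γ)·(max_{a∈β̂(s)} Q_In(a) − Q_In(a'))/(K_Q·(1−γ+λγ)) for every non-maximizer a' ∈ β̂(s) of Q_In, then a_in is a maximizer of Q_In over β̂(s). -/
/-!
The greedy value dominates the in-sample optimum, `max Q_In ≤ Q̂(â)`, since `Q̂ ≥ Q_In` on
`β̂(s) ⊆ β̃(s)`. Lipschitz continuity moves `â` to `a_in` at cost `K_Q·ε_a`, and the upper
sandwich bound at `a_in` costs another `λ·ε_a·K_Q·γ/(1−γ)`; the two add up to the stated gap.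
Under the threshold on `ε_a`, every positive gap exceeds this bound, so the gap at `a_in` is zero.
-/

lemma le_add_mul_of_abs_sub_le_mul_dist {α : Type*} [PseudoMetricSpace α] {f : α → ℝ}
    {K ε : ℝ} {x y : α} (hf : |f x - f y| ≤ K * dist x y) (hK : 0 ≤ K)
    (hxy : dist x y ≤ ε) : f x ≤ f y + K * ε := by
  linarith [(abs_le.mp hf).2, mul_le_mul_of_nonneg_left hxy hK]

lemma div_le_of_le_mul_div {g d x ε : ℝ} (hε : 0 ≤ ε) (hd : 0 < d) (hg : 0 ≤ g)
    (h : g ≤ x * ε / d) : d * g / x ≤ ε := by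
  rcases le_or_gt x 0 with hx | hx
  · exact (div_nonpos_of_nonneg_of_nonpos (mul_nonneg hd.le hg) hx).trans hε
  · rw [div_le_iff₀ hx]
    rw [le_div_iff₀ hd] at h
    linarith

theorem dmg_greedy_neighbor_near_optimal_general
    {A : Type*} [MetricSpace A]
    (γ lam εa K_Q : ℝ)
    (hγ1 : γ < 1)
    (hεa : 0 ≤ εa) (hKQ : 0 ≤ K_Q)
    (βhat βtil : Finset A) (hβhat : βhat.Nonempty)
    (hsub : βhat ⊆ βtil)
    (QIn Qhat : A → ℝ)
    (hQhatLip : ∀ a₁ a₂, |Qhat a₁ - Qhat a₂| ≤ K_Q * dist a₁ a₂)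
    (hsandwich : ∀ a ∈ βhat,
      QIn a ≤ Qhat a ∧ Qhat a ≤ QIn a + lam * εa * K_Q * γ / (1 - γ))
    (ahat : A) (hgreedy : ∀ a ∈ βtil, Qhat a ≤ Qhat ahat)
    (ain : A) (hain : ain ∈ βhat) (hdist : dist ahat ain ≤ εa) :
    βhat.sup' hβhat QIn - QIn ain ≤ K_Q * εa * (1 - γ + lam * γ) / (1 - γ) ∧
    ((∀ a' ∈ βhat, QIn a' < βhat.sup' hβhat QIn →
        εa < (1 - γ) * (βhat.sup' hβhat QIn - QIn a') / (K_Q * (1 - γ + lam * γ))) →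
      ∀ a ∈ βhat, QIn a ≤ QIn ain) := by
  have hγ : 0 < 1 - γ := sub_pos.2 hγ1
  have hsup_le : βhat.sup' hβhat QIn ≤ Qhat ahat :=
    Finset.sup'_le _ _ fun a ha => (hsandwich a ha).1.trans (hgreedy a (hsub ha))
  have hmove := le_add_mul_of_abs_sub_le_mul_dist (hQhatLip ahat ain) hKQ hdist
  have hsplit : K_Q * εa * (1 - γ + lam * γ) / (1 - γ)
      = K_Q * εa + lam * εa * K_Q * γ / (1 - γ) := by
    field_simp
  have hgap : βhat.sup' hβhat QIn - QIn ain ≤ K_Q * εa * (1 - γ + lam * γ) / (1 - γ) := by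
    rw [hsplit]
    linarith [(hsandwich ain hain).2]
  refine ⟨hgap, fun hthreshold a ha => ?_⟩
  by_contra! hlt
  have hain_lt : QIn ain < βhat.sup' hβhat QIn := hlt.trans_le (Finset.le_sup' QIn ha)
  refine (hthreshold ain hain hain_lt).not_ge (div_le_of_le_mul_div hεa hγ
    (sub_nonneg.2 hain_lt.le) (hgap.trans_eq ?_))
  ring

/-- Near-optimality of the in-sample neighbor of the DMG greedy action: the in-sample
optimal value gap at `a_in` is at most `K_Q·ε_a·(1−γ+λγ)/(1−γ)`; in particular, if `ε_a` is
small enough relative to every nonzero gap, then `a_in` maximizes `Q_In` over `β̂(s)`. -/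
theorem dmg_greedy_neighbor_near_optimal
    {A : Type*} [MetricSpace A]
    (γ lam εa K_Q : ℝ)
    (hγ0 : 0 ≤ γ) (hγ1 : γ < 1) (hlam0 : 0 ≤ lam) (hlam1 : lam ≤ 1)
    (hεa : 0 ≤ εa) (hKQ : 0 ≤ K_Q)
    (βhat βtil : Finset A) (hβhat : βhat.Nonempty) (hβtil : βtil.Nonempty)
    (hsub : βhat ⊆ βtil)
    (QIn Qhat : A → ℝ)
    (hQhatLip : ∀ a₁ a₂, |Qhat a₁ - Qhat a₂| ≤ K_Q * dist a₁ a₂)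
    (hsandwich : ∀ a ∈ βhat,
      QIn a ≤ Qhat a ∧ Qhat a ≤ QIn a + lam * εa * K_Q * γ / (1 - γ))
    (ahat : A) (hahat : ahat ∈ βtil) (hgreedy : ∀ a ∈ βtil, Qhat a ≤ Qhat ahat)
    (ain : A) (hain : ain ∈ βhat) (hdist : dist ahat ain ≤ εa) :
    βhat.sup' hβhat QIn - QIn ain ≤ K_Q * εa * (1 - γ + lam * γ) / (1 - γ) ∧
    ((∀ a' ∈ βhat, QIn a' < βhat.sup' hβhat QIn →
        εa < (1 - γ) * (βhat.sup' hβhat QIn - QIn a') / (K_Q * (1 - γ + lam * γ))) →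
      ∀ a ∈ βhat, QIn a ≤ QIn ain) :=
  dmg_greedy_neighbor_near_optimal_general γ lam εa K_Q hγ1 hεa hKQ βhat βtil hβhat hsub QIn Qhat
    hQhatLip hsandwich ahat hgreedy ain hain hdist
end
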